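/- arXiv:1510.02800 — 5 statements merged into one kernel-verified Lean document; each statement's English description precedes it below -/
import Mathlib

section
/- A finite simple graph G is 3-colorable if and only if there exists a Hermitian positive semidefinite complex matrix A, with rows and columns indexed by the vertices of G', such that rank(A) ≤ 3 and A fits G'. -/
open Matrix
open scoped ComplexOrder

/-- Vertices of the graph `G'`: the original vertices of `G` together with, for every
pair `{i,j}` of distinct vertices (represented as `i < j`), four new gadget vertices
`a_{ij}, b_{ij}, c_{ij}, d_{ij}` encoded as `Fin 4` (`0 = a`, `1 = b`, `2 = c`, `3 = d`). -/
abbrev GVert (n : ℕ) := Fin n ⊕ ({p : Fin n × Fin n // p.1 < p.2} × Fin 4)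

/-- The edges of `G'`: the original edges of `G`, and for every pair `i < j` the nine
gadget edges `{i,a},{i,b},{i,d},{a,b},{a,j},{b,c},{c,d},{c,j},{d,j}`. -/
def gadgetRel {n : ℕ} (G : SimpleGraph (Fin n)) : GVert n → GVert n → Prop
  | Sum.inl i, Sum.inl j => G.Adj i j
  | Sum.inl v, Sum.inr (⟨(i, j), _⟩, k) =>
      (v = i ∧ (k = 0 ∨ k = 1 ∨ k = 3)) ∨ (v = j ∧ (k = 0 ∨ k = 2 ∨ k = 3))
  | Sum.inr (p, k), Sum.inr (q, l) =>
      p = q ∧ ((k = 0 ∧ l = 1) ∨ (k = 1 ∧ l = 2) ∨ (k = 2 ∧ l = 3))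
  | _, _ => False

/-- The graph `G'` obtained from `G` by inserting the gadget `H_{ij}` for every pair of
distinct vertices `i, j` of `G`. -/
def gadgetGraph {n : ℕ} (G : SimpleGraph (Fin n)) : SimpleGraph (GVert n) :=
  SimpleGraph.fromRel (gadgetRel G)

/-- The triangle decoration `Δ(H)` of a graph `H`: each vertex `w` becomes the triangle
`(w,1),(w,2),(w,3)` (here `(w,0),(w,1),(w,2)`), with `(w,0)` identified with `w`. -/
def triDec {W : Type*} (H : SimpleGraph W) : SimpleGraph (W × Fin 3) :=
  SimpleGraph.fromRel fun a b =>
    (a.2 = 0 ∧ b.2 = 0 ∧ H.Adj a.1 b.1) ∨ (a.1 = b.1 ∧ a.2 ≠ b.2)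

/-- A matrix `A` fits a graph `H` if all its diagonal entries are `1` and `A v w = 0`
whenever `{v,w}` is an edge of `H`. -/
def Fits {V R : Type*} [Zero R] [One R] (H : SimpleGraph V) (A : Matrix V V R) : Prop :=
  (∀ v, A v v = 1) ∧ ∀ v w, H.Adj v w → A v w = 0


/-!
A 3-colouring of `G` extends to `G'`, since each gadget `H_{ij}` can be 3-coloured whatever the
colours of `i` and `j`; sending every vertex to the standard basis vector of its colour in `ℂ³`
gives a Gram matrix of rank at most 3 that fits `G'`.

Conversely, a positive semidefinite `A` fitting `G'` is the Gram matrix of unit vectors, orthogonal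
along the edges of `G'`, in a space of dimension `rank A ≤ 3`. In dimension three the gadget
`H_{ij}` forces the vectors of `i` and `j` to be orthogonal or parallel, so colouring each vertex
of `G` by the line its vector spans is a proper colouring by pairwise orthogonal lines, of which
there are at most three.
-/

open Module Submodule SimpleGraph
open scoped InnerProductSpace

section OrthonormalRep

variable (𝕜 : Type*) {V E : Type*} [RCLike 𝕜] [NormedAddCommGroup E] [InnerProductSpace 𝕜 E]

/-- Orthogonality is imposed along edges; Lovász's orthonormal representations impose it along
non-edges. -/
def IsOrthonormalRep (H : SimpleGraph V) (f : V → E) : Prop :=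
  (∀ v, ‖f v‖ = 1) ∧ ∀ v w, H.Adj v w → ⟪f v, f w⟫_𝕜 = 0

variable {𝕜}

theorem isOrthonormalRep_top_iff {f : V → E} :
    IsOrthonormalRep 𝕜 (⊤ : SimpleGraph V) f ↔ Orthonormal 𝕜 f := by
  simp [IsOrthonormalRep, Orthonormal, Pairwise]

theorem IsOrthonormalRep.comp {W : Type*} {H : SimpleGraph V} {H' : SimpleGraph W} {f : V → E}
    (hf : IsOrthonormalRep 𝕜 H f) (φ : H' →g H) : IsOrthonormalRep 𝕜 H' (f ∘ φ) :=
  ⟨fun v => hf.1 (φ v), fun _ _ h => hf.2 _ _ (φ.map_rel h)⟩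

theorem fits_gram_iff {H : SimpleGraph V} {f : V → E} :
    Fits H (gram 𝕜 f) ↔ IsOrthonormalRep 𝕜 H f := by
  have hnorm (x : E) : ⟪x, x⟫_𝕜 = 1 ↔ ‖x‖ = 1 := by
    rw [inner_self_eq_norm_sq_to_K]
    norm_cast
    exact pow_eq_one_iff_of_nonneg (norm_nonneg x) two_ne_zero
  simp only [Fits, IsOrthonormalRep, gram_apply, hnorm]

end OrthonormalRep

section Geometry

variable {𝕜 E : Type*} [RCLike 𝕜] [NormedAddCommGroup E] [InnerProductSpace 𝕜 E]

theorem Orthonormal.sum_inner_smul_eq [FiniteDimensional 𝕜 E] {ι : Type*} [Fintype ι]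
    {e : ι → E} (he : Orthonormal 𝕜 e) (hcard : finrank 𝕜 E ≤ Fintype.card ι) (x : E) :
    ∑ i, ⟪e i, x⟫_𝕜 • e i = x := by
  have hspan := he.linearIndependent.span_eq_top_of_card_eq_finrank'
    (he.linearIndependent.fintype_card_le_finrank.antisymm hcard)
  simpa using (OrthonormalBasis.mk he hspan.ge).sum_repr' x

theorem inner_eq_zero_or_span_eq_of_gadget [FiniteDimensional 𝕜 E] (hE : finrank 𝕜 E ≤ 3)
    {i a b c d j : E} (hcdj : Orthonormal 𝕜 ![c, d, j]) (hi : i ≠ 0) (ha : a ≠ 0) (hb : b ≠ 0)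
    (hia : ⟪i, a⟫_𝕜 = 0) (hib : ⟪i, b⟫_𝕜 = 0) (hid : ⟪i, d⟫_𝕜 = 0) (hab : ⟪a, b⟫_𝕜 = 0)
    (haj : ⟪a, j⟫_𝕜 = 0) (hbc : ⟪b, c⟫_𝕜 = 0) :
    ⟪i, j⟫_𝕜 = 0 ∨ 𝕜 ∙ i = 𝕜 ∙ j := by
  have expand (x : E) : x = ⟪c, x⟫_𝕜 • c + ⟪d, x⟫_𝕜 • d + ⟪j, x⟫_𝕜 • j := by
    simpa [Fin.sum_univ_three, add_assoc] using (hcdj.sum_inner_smul_eq (by simpa using hE) x).symm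
  have hi' : i = ⟪c, i⟫_𝕜 • c + ⟪j, i⟫_𝕜 • j := by
    simpa [inner_eq_zero_symm.mp hid] using expand i
  by_cases hci : ⟪c, i⟫_𝕜 = 0
  · right
    rw [hci, zero_smul, zero_add] at hi'
    have ht : ⟪j, i⟫_𝕜 ≠ 0 := left_ne_zero_of_smul (hi' ▸ hi)
    rw [hi', span_singleton_smul_eq ht.isUnit]
  left
  -- `a ⟂ i, j` and `i ∉ 𝕜 ∙ j` force `a ∥ d`; then `b ⟂ a, c` forces `b ∥ j`, and `b ⟂ i`.
  have hac : ⟪a, c⟫_𝕜 = 0 := by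
    have : ⟪a, i⟫_𝕜 = ⟪c, i⟫_𝕜 * ⟪a, c⟫_𝕜 := by
      conv_lhs => rw [hi']
      simp [inner_add_right, inner_smul_right, haj]
    rw [inner_eq_zero_symm.mp hia] at this
    exact (mul_eq_zero.mp this.symm).resolve_left hci
  have ha' : a = ⟪d, a⟫_𝕜 • d := by
    simpa [inner_eq_zero_symm.mp hac, inner_eq_zero_symm.mp haj] using expand a
  have hda : ⟪d, a⟫_𝕜 ≠ 0 := left_ne_zero_of_smul (ha' ▸ ha)
  have hbd : ⟪b, d⟫_𝕜 = 0 := by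
    have hba := inner_eq_zero_symm.mp hab
    rw [ha', inner_smul_right] at hba
    exact (mul_eq_zero.mp hba).resolve_left hda
  have hb' : b = ⟪j, b⟫_𝕜 • j := by
    simpa [inner_eq_zero_symm.mp hbc, inner_eq_zero_symm.mp hbd] using expand b
  rw [hb', inner_smul_right] at hib
  exact (mul_eq_zero.mp hib).resolve_left (left_ne_zero_of_smul (hb' ▸ hb))

theorem inner_ne_zero_of_span_singleton_eq {x y : E} (hx : x ≠ 0) (h : 𝕜 ∙ x = 𝕜 ∙ y) :
    ⟪x, y⟫_𝕜 ≠ 0 := by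
  obtain ⟨t, rfl⟩ := mem_span_singleton.mp (h ▸ mem_span_singleton_self y)
  have ht : t ≠ 0 := by
    rintro rfl
    exact hx (by simpa using h)
  simpa [inner_smul_right, ht] using hx

end Geometry

theorem SimpleGraph.colorable_finrank_of_isOrthonormalRep {𝕜 V E : Type*} [RCLike 𝕜]
    [NormedAddCommGroup E] [InnerProductSpace 𝕜 E] [FiniteDimensional 𝕜 E] [Finite V]
    {H : SimpleGraph V} {f : V → E} (hf : IsOrthonormalRep 𝕜 H f)
    (hpar : ∀ v w, ⟪f v, f w⟫_𝕜 = 0 ∨ 𝕜 ∙ f v = 𝕜 ∙ f w) :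
    H.Colorable (finrank 𝕜 E) := by
  classical
  have := Fintype.ofFinite V
  have hne (v : V) : f v ≠ 0 := norm_ne_zero_iff.mp (by simp [hf.1 v])
  -- Colour each vertex by the line its vector spans; distinct colours are orthogonal lines.
  let C : H.Coloring (Set.range fun v => 𝕜 ∙ f v) :=
    Coloring.mk (fun v => ⟨_, v, rfl⟩) fun {v w} hvw hC =>
      inner_ne_zero_of_span_singleton_eq (hne v) (congrArg Subtype.val hC) (hf.2 v w hvw)
  choose rep hrep using fun l : Set.range (fun v => 𝕜 ∙ f v) => l.2
  have horth : Orthonormal 𝕜 (f ∘ rep) := by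
    refine ⟨fun l => hf.1 (rep l), fun l l' hll' => (hpar _ _).resolve_right fun h => hll' ?_⟩
    exact Subtype.ext ((hrep l).symm.trans (h.trans (hrep l')))
  exact C.colorable.mono horth.linearIndependent.fintype_card_le_finrank

section Gram

variable {𝕜 V E : Type*} [RCLike 𝕜] [NormedAddCommGroup E] [InnerProductSpace 𝕜 E] [Fintype V]

theorem rank_gram [FiniteDimensional 𝕜 E] (f : V → E) :
    (gram 𝕜 f).rank = finrank 𝕜 (span 𝕜 (Set.range f)) := by
  let b := stdOrthonormalBasis 𝕜 E
  let e : E ≃ₗ[𝕜] (Fin (finrank 𝕜 E) → 𝕜) :=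
    b.repr.toLinearEquiv.trans (WithLp.linearEquiv 2 𝕜 _)
  rw [gram_eq_conjTranspose_mul b, rank_conjTranspose_mul_self, rank_eq_finrank_span_cols,
    ← e.finrank_map_eq, Submodule.map_span, ← Set.range_comp]
  rfl

theorem Matrix.PosSemidef.exists_eq_gram {A : Matrix V V 𝕜} (hA : A.PosSemidef) :
    ∃ f : V → EuclideanSpace 𝕜 V, gram 𝕜 f = A := by
  classical
  open MatrixOrder in
  obtain ⟨B, rfl⟩ := CStarAlgebra.nonneg_iff_eq_star_mul_self.mp hA.nonneg
  refine ⟨fun v => WithLp.toLp 2 fun k => B k v, ?_⟩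
  ext v w
  simp [gram_apply, mul_apply, PiLp.inner_apply, mul_comm]

theorem exists_isOrthonormalRep_of_fits {H : SimpleGraph V} {A : Matrix V V 𝕜}
    (hA : A.PosSemidef) (hfit : Fits H A) :
    ∃ (W : Submodule 𝕜 (EuclideanSpace 𝕜 V)) (f : V → W),
      IsOrthonormalRep 𝕜 H f ∧ finrank 𝕜 W = A.rank := by
  obtain ⟨f, rfl⟩ := hA.exists_eq_gram
  refine ⟨span 𝕜 (Set.range f), fun v => ⟨f v, subset_span ⟨v, rfl⟩⟩, ?_, (rank_gram f).symm⟩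
  rw [← fits_gram_iff]
  exact hfit

theorem exists_posSemidef_rank_le_fits_of_colorable {H : SimpleGraph V} {k : ℕ}
    (hH : H.Colorable k) : ∃ A : Matrix V V 𝕜, A.PosSemidef ∧ A.rank ≤ k ∧ Fits H A := by
  obtain ⟨C⟩ := hH
  have hf := (isOrthonormalRep_top_iff.mpr (EuclideanSpace.basisFun (Fin k) 𝕜).orthonormal).comp C
  refine ⟨gram 𝕜 _, posSemidef_gram 𝕜 _, ?_, fits_gram_iff.mpr hf⟩
  rw [rank_gram]
  exact (Submodule.finrank_le _).trans finrank_euclideanSpace_fin.le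

end Gram

section GadgetGraph

variable {n : ℕ} {G : SimpleGraph (Fin n)}

/-- The colours of `a, b, c, d` when `i` and `j` have colours `x` and `y`; for `x ≠ y`,
`-(x + y)` is the third colour. -/
def gadgetColor (x y : Fin 3) : Fin 4 → Fin 3 :=
  if x = y then ![x + 1, x + 2, x + 1, x + 2] else ![-(x + y), y, x, -(x + y)]

theorem gadgetColor_spec (x y : Fin 3) (k : Fin 4) :
    ((k = 0 ∨ k = 1 ∨ k = 3) → x ≠ gadgetColor x y k) ∧
    ((k = 0 ∨ k = 2 ∨ k = 3) → y ≠ gadgetColor x y k) ∧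
    ∀ l, ((k = 0 ∧ l = 1) ∨ (k = 1 ∧ l = 2) ∨ (k = 2 ∧ l = 3)) →
      gadgetColor x y k ≠ gadgetColor x y l := by
  revert x y k
  decide

def gadgetExtend (C : Fin n → Fin 3) : GVert n → Fin 3
  | .inl v => C v
  | .inr (⟨(i, j), _⟩, k) => gadgetColor (C i) (C j) k

theorem gadgetExtend_ne_of_gadgetRel (C : G.Coloring (Fin 3)) {v w : GVert n}
    (h : gadgetRel G v w) : gadgetExtend C v ≠ gadgetExtend C w := by
  match v, w, h with
  | .inl _, .inl _, h => exact C.valid h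
  | .inl _, .inr (⟨(_, _), _⟩, k), .inl ⟨rfl, hk⟩ => exact (gadgetColor_spec _ _ k).1 hk
  | .inl _, .inr (⟨(_, _), _⟩, k), .inr ⟨rfl, hk⟩ => exact (gadgetColor_spec _ _ k).2.1 hk
  | .inr (⟨(_, _), _⟩, k), .inr (_, l), ⟨rfl, hkl⟩ => exact (gadgetColor_spec _ _ k).2.2 l hkl

theorem gadgetGraph_colorable (hG : G.Colorable 3) : (gadgetGraph G).Colorable 3 := by
  obtain ⟨C⟩ := hG
  refine ⟨Coloring.mk (gadgetExtend C) fun {v w} hvw => ?_⟩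
  rcases ((fromRel_adj _ _ _).mp hvw).2 with h | h
  exacts [gadgetExtend_ne_of_gadgetRel C h, (gadgetExtend_ne_of_gadgetRel C h).symm]

def inlGadgetGraph (G : SimpleGraph (Fin n)) : G →g gadgetGraph G where
  toFun := .inl
  map_rel' h := (fromRel_adj _ _ _).mpr ⟨by simpa using G.ne_of_adj h, .inl h⟩

end GadgetGraph

section GadgetGraphRep

variable {𝕜 E : Type*} [RCLike 𝕜] [NormedAddCommGroup E] [InnerProductSpace 𝕜 E]
  [FiniteDimensional 𝕜 E] {n : ℕ} {G : SimpleGraph (Fin n)} {f : GVert n → E}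

theorem IsOrthonormalRep.inner_eq_zero_or_span_eq_of_lt (hE : finrank 𝕜 E ≤ 3)
    (hf : IsOrthonormalRep 𝕜 (gadgetGraph G) f) {i j : Fin n} (hij : i < j) :
    ⟪f (.inl i), f (.inl j)⟫_𝕜 = 0 ∨ 𝕜 ∙ f (.inl i) = 𝕜 ∙ f (.inl j) := by
  let g (k : Fin 4) := f (.inr (⟨(i, j), hij⟩, k))
  have hne (v : GVert n) : f v ≠ 0 := norm_ne_zero_iff.mp (by simp [hf.1 v])
  have hcdj : Orthonormal 𝕜 ![g 2, g 3, f (.inl j)] := by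
    refine ⟨fun k => by fin_cases k <;> exact hf.1 _, fun k l hkl => ?_⟩
    fin_cases k <;> fin_cases l <;> first
      | exact absurd rfl hkl
      | exact hf.2 _ _ (by simp [gadgetGraph, gadgetRel])
  refine inner_eq_zero_or_span_eq_of_gadget hE (a := g 0) (b := g 1) hcdj (hne _) (hne _) (hne _)
    ?_ ?_ ?_ ?_ ?_ ?_ <;> exact hf.2 _ _ (by simp [gadgetGraph, gadgetRel])

theorem IsOrthonormalRep.inner_eq_zero_or_span_eq (hE : finrank 𝕜 E ≤ 3)
    (hf : IsOrthonormalRep 𝕜 (gadgetGraph G) f) (i j : Fin n) :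
    ⟪f (.inl i), f (.inl j)⟫_𝕜 = 0 ∨ 𝕜 ∙ f (.inl i) = 𝕜 ∙ f (.inl j) := by
  rcases lt_trichotomy i j with hij | rfl | hji
  · exact hf.inner_eq_zero_or_span_eq_of_lt hE hij
  · exact .inr rfl
  · exact (hf.inner_eq_zero_or_span_eq_of_lt hE hji).imp inner_eq_zero_symm.mp Eq.symm

end GadgetGraphRep

theorem stmt0 {n : ℕ} (G : SimpleGraph (Fin n)) :
    G.Colorable 3 ↔
      ∃ A : Matrix (GVert n) (GVert n) ℂ,
        A.PosSemidef ∧ A.rank ≤ 3 ∧ Fits (gadgetGraph G) A := by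
  constructor
  · exact fun hG => exists_posSemidef_rank_le_fits_of_colorable (gadgetGraph_colorable hG)
  · rintro ⟨A, hA, hrank, hfit⟩
    obtain ⟨W, f, hf, hW⟩ := exists_isOrthonormalRep_of_fits hA hfit
    have hW3 : finrank ℂ W ≤ 3 := hW ▸ hrank
    exact (colorable_finrank_of_isOrthonormalRep (hf.comp (inlGadgetGraph G))
      (hf.inner_eq_zero_or_span_eq hW3)).mono hW3
end

section
/- Let G be a finite simple graph. There exist vectors ψ_{y,z} ∈ ℂ³, indexed by the vertices y of G' and z ∈ {1,2,3}, such that the matrix with entries |⟨ψ_{y,z}, ψ_{y',z'}⟩|² fits Δ(G'), if and only if there exist 3-dimensional quantum states ρ_{y,z} (one for each vertex y of G' and each z ∈ {1,2,3}) and, for each vertex y' of G', a 3-dimensional POVM (E_{y',1}, E_{y',2}, E_{y',3}) such that the matrix with entries tr(ρ_{y,z} E_{y',z'}) fits Δ(G'). -/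
open Matrix
open scoped ComplexOrder

/-- A `d`-dimensional quantum state: a positive semidefinite complex `d × d` matrix of trace 1. -/
def IsState {d : ℕ} (ρ : Matrix (Fin d) (Fin d) ℂ) : Prop :=
  ρ.PosSemidef ∧ ρ.trace = 1

/-- A `d`-dimensional POVM with `Z` outcomes: positive semidefinite complex `d × d` matrices
summing to the identity. -/
def IsPOVM {d Z : ℕ} (E : Fin Z → Matrix (Fin d) (Fin d) ℂ) : Prop :=
  (∀ z, (E z).PosSemidef) ∧ ∑ z, E z = 1

/-!
A unit vector `ψ` gives the rank-one projection `ψψᴴ`, which is both a state and an effect, and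
`tr (ψψᴴ φφᴴ) = |⟨ψ, φ⟩|²`. The triangle of `Δ(G')` over a vertex makes its three vectors an
orthonormal basis of `ℂ³`, so their projections sum to the identity and form a POVM.

Conversely, `tr (A B) = 0` for positive semidefinite `A`, `B` forces `A B = 0`. Applied to
`tr (ρ_a E_b) = 0` on edges and to `tr (ρ_b (1 - E_b)) = 1 - 1 = 0`, this gives
`ρ_a ρ_b = ρ_a E_b ρ_b = 0`, so unit vectors chosen in the ranges of the `ρ_a` are orthogonal
along the edges.
-/

namespace Matrix

variable {n : Type*} [Fintype n]

open scoped MatrixOrder in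
theorem PosSemidef.mul_eq_zero_of_trace_mul_eq_zero {𝕜 : Type*} [RCLike 𝕜] {A B : Matrix n n 𝕜}
    (hA : A.PosSemidef) (hB : B.PosSemidef) (h : (A * B).trace = 0) : A * B = 0 := by
  classical
  obtain ⟨X, rfl⟩ := CStarAlgebra.nonneg_iff_eq_star_mul_self.mp hA.nonneg
  obtain ⟨Y, rfl⟩ := CStarAlgebra.nonneg_iff_eq_star_mul_self.mp hB.nonneg
  simp only [star_eq_conjTranspose] at h ⊢
  have hYX : Y * Xᴴ = 0 := by
    -- `tr ((Y Xᴴ)ᴴ (Y Xᴴ)) = tr (Xᴴ X Yᴴ Y)` by cyclicity of the trace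
    rw [← trace_conjTranspose_mul_self_eq_zero_iff, ← h, conjTranspose_mul,
      conjTranspose_conjTranspose, Matrix.mul_assoc, trace_mul_comm, Matrix.mul_assoc,
      Matrix.mul_assoc, trace_mul_comm (Xᴴ * X), Matrix.mul_assoc]
  calc Xᴴ * X * (Yᴴ * Y) = Xᴴ * (Y * Xᴴ)ᴴ * Y := by
        simp only [conjTranspose_mul, conjTranspose_conjTranspose, Matrix.mul_assoc]
    _ = 0 := by rw [hYX, conjTranspose_zero, Matrix.mul_zero, Matrix.zero_mul]

theorem sum_vecMulVec_star_eq_one {R : Type*} [DecidableEq n] [CommRing R] [StarRing R]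
    (u : n → n → R) (hu : ∀ z w, star (u z) ⬝ᵥ u w = if z = w then 1 else 0) :
    ∑ z, vecMulVec (u z) (star (u z)) = 1 := by
  set U : Matrix n n R := of fun j z => u z j
  have hU : Uᴴ * U = 1 := by
    ext z w
    simpa [U, mul_apply, one_apply, dotProduct] using hu z w
  rw [← mul_eq_one_comm.mp hU]
  ext i j
  simp [U, mul_apply, Matrix.sum_apply, vecMulVec_apply]

theorem trace_vecMulVec_star_mul_vecMulVec_star (u v : n → ℂ) :
    (vecMulVec u (star u) * vecMulVec v (star v)).trace = ((‖star u ⬝ᵥ v‖ ^ 2 : ℝ) : ℂ) := by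
  rw [vecMulVec_mul_vecMulVec, trace_vecMulVec, dotProduct_smul, smul_eq_mul, dotProduct_star,
    dotProduct_comm v]
  set z := star u ⬝ᵥ v
  rw [← starRingEnd_apply, Complex.mul_conj', Complex.ofReal_pow]

theorem star_dotProduct_self_eq_one {v : n → ℂ} (hv : ‖star v ⬝ᵥ v‖ ^ 2 = 1) :
    star v ⬝ᵥ v = 1 := by
  rw [Complex.eq_coe_norm_of_nonneg (dotProduct_star_self_nonneg v),
    (pow_eq_one_iff_of_nonneg (norm_nonneg _) two_ne_zero).mp hv, Complex.ofReal_one]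

theorem exists_star_mulVec_dotProduct_mulVec_eq_one [DecidableEq n] {ρ : Matrix n n ℂ}
    (hρ : ρ ≠ 0) : ∃ u, star (ρ *ᵥ u) ⬝ᵥ (ρ *ᵥ u) = 1 := by
  obtain ⟨u, hu⟩ : ∃ u, ρ *ᵥ u ≠ 0 := by
    by_contra! h
    exact hρ (ext_of_mulVec_single fun j => by rw [h, zero_mulVec])
  set x := ρ *ᵥ u
  set s := ‖star x ⬝ᵥ x‖
  have hx : star x ⬝ᵥ x = (s : ℂ) := Complex.eq_coe_norm_of_nonneg (dotProduct_star_self_nonneg x)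
  have hs : 0 < s := norm_pos_iff.mpr (dotProduct_star_self_eq_zero.not.mpr hu)
  refine ⟨(√s)⁻¹ • u, ?_⟩
  rw [mulVec_smul, star_smul, star_trivial, smul_dotProduct, dotProduct_smul, hx, smul_smul,
    Complex.real_smul]
  norm_cast
  rw [← mul_inv, Real.mul_self_sqrt hs.le, inv_mul_cancel₀ hs.ne']

end Matrix

theorem Fits.map {V R S : Type*} [Zero R] [One R] [Zero S] [One S] {H : SimpleGraph V}
    {A : Matrix V V R} (hA : Fits H A) {f : R → S} (f0 : f 0 = 0) (f1 : f 1 = 1) :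
    Fits H (A.map f) :=
  ⟨fun v => by simp [hA.1 v, f1], fun v w hvw => by simp [hA.2 v w hvw, f0]⟩

theorem triDec_adj_of_ne {W : Type*} (H : SimpleGraph W) (w : W) {z z' : Fin 3} (h : z ≠ z') :
    (triDec H).Adj (w, z) (w, z') := by
  simp [triDec, h]

theorem IsState.ne_zero {d : ℕ} {ρ : Matrix (Fin d) (Fin d) ℂ} (hρ : IsState ρ) : ρ ≠ 0 := by
  rintro rfl
  simpa using hρ.2

theorem IsPOVM.posSemidef_one_sub {d Z : ℕ} {E : Fin Z → Matrix (Fin d) (Fin d) ℂ}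
    (hE : IsPOVM E) (z : Fin Z) : (1 - E z).PosSemidef := by
  rw [← hE.2, ← Finset.add_sum_erase _ _ (Finset.mem_univ z), add_sub_cancel_left]
  exact posSemidef_sum _ fun w _ => hE.1 w

theorem exists_states_povms_fits_of_fits_overlap {W : Type*} {d : ℕ}
    (H : SimpleGraph (W × Fin d)) (hH : ∀ w z z', z ≠ z' → H.Adj (w, z) (w, z'))
    (ψ : W → Fin d → Fin d → ℂ)
    (hψ : Fits H (of fun a b => ‖star (ψ a.1 a.2) ⬝ᵥ ψ b.1 b.2‖ ^ 2)) :
    ∃ ρ E : W → Fin d → Matrix (Fin d) (Fin d) ℂ, (∀ y z, IsState (ρ y z)) ∧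
      (∀ y, IsPOVM (E y)) ∧ Fits H (of fun a b => (ρ a.1 a.2 * E b.1 b.2).trace) := by
  have hunit : ∀ y z, star (ψ y z) ⬝ᵥ ψ y z = 1 := fun y z =>
    star_dotProduct_self_eq_one (hψ.1 (y, z))
  have horth : ∀ y z z', z ≠ z' → star (ψ y z) ⬝ᵥ ψ y z' = 0 := fun y z z' h => by
    simpa using hψ.2 _ _ (hH y z z' h)
  set P := fun y z => vecMulVec (ψ y z) (star (ψ y z))
  have hP : (of fun a b : W × Fin d => (P a.1 a.2 * P b.1 b.2).trace) =
      (of fun a b => ‖star (ψ a.1 a.2) ⬝ᵥ ψ b.1 b.2‖ ^ 2).map ((↑) : ℝ → ℂ) := by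
    ext a b
    simp [P, trace_vecMulVec_star_mul_vecMulVec_star]
  refine ⟨P, P, fun y z => ⟨posSemidef_vecMulVec_self_star _, ?_⟩,
    fun y => ⟨fun z => posSemidef_vecMulVec_self_star _,
      sum_vecMulVec_star_eq_one _ fun z z' => ?_⟩,
    hP ▸ hψ.map Complex.ofReal_zero Complex.ofReal_one⟩
  · rw [trace_vecMulVec, dotProduct_comm, hunit]
  · split_ifs with h
    · exact h ▸ hunit y z
    · exact horth y z z' h

theorem mul_eq_zero_of_fits_trace {V : Type*} {d : ℕ} {H : SimpleGraph V}
    {ρ E : V → Matrix (Fin d) (Fin d) ℂ} (hρ : ∀ a, IsState (ρ a))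
    (hE : ∀ a, (E a).PosSemidef ∧ (1 - E a).PosSemidef)
    (hfit : Fits H (of fun a b => (ρ a * E b).trace)) {a b : V} (hab : H.Adj a b) :
    ρ a * ρ b = 0 := by
  have hρE : ρ a * E b = 0 :=
    (hρ a).1.mul_eq_zero_of_trace_mul_eq_zero (hE b).1 (hfit.2 a b hab)
  have hEρ : ρ b = E b * ρ b := by
    have hbb : (ρ b * E b).trace = 1 := hfit.1 b
    have h := (hE b).2.mul_eq_zero_of_trace_mul_eq_zero (hρ b).1 (by
      rw [trace_mul_comm, mul_sub, mul_one, trace_sub, (hρ b).2, hbb, sub_self])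
    rwa [sub_mul, one_mul, sub_eq_zero] at h
  rw [hEρ, ← Matrix.mul_assoc, hρE, Matrix.zero_mul]

theorem exists_fits_overlap_of_mul_eq_zero {V d : Type*} [Fintype d] [DecidableEq d]
    {H : SimpleGraph V} {ρ : V → Matrix d d ℂ} (hherm : ∀ a, (ρ a).IsHermitian)
    (hne : ∀ a, ρ a ≠ 0) (horth : ∀ a b, H.Adj a b → ρ a * ρ b = 0) :
    ∃ ψ : V → d → ℂ, Fits H (of fun a b => ‖star (ψ a) ⬝ᵥ ψ b‖ ^ 2) := by
  choose u hu using fun a => exists_star_mulVec_dotProduct_mulVec_eq_one (hne a)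
  refine ⟨fun a => ρ a *ᵥ u a, fun a => by simp [hu a], fun a b hab => ?_⟩
  have hab' : star (ρ a *ᵥ u a) ⬝ᵥ (ρ b *ᵥ u b) = 0 := by
    rw [star_mulVec, (hherm a).eq, dotProduct_mulVec, vecMul_vecMul, horth a b hab, vecMul_zero,
      zero_dotProduct]
  simp [hab']

theorem exists_fits_overlap_of_fits_trace {V : Type*} {d : ℕ} {H : SimpleGraph V}
    {ρ E : V → Matrix (Fin d) (Fin d) ℂ} (hρ : ∀ a, IsState (ρ a))
    (hE : ∀ a, (E a).PosSemidef ∧ (1 - E a).PosSemidef)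
    (hfit : Fits H (of fun a b => (ρ a * E b).trace)) :
    ∃ ψ : V → Fin d → ℂ, Fits H (of fun a b => ‖star (ψ a) ⬝ᵥ ψ b‖ ^ 2) :=
  exists_fits_overlap_of_mul_eq_zero (fun a => (hρ a).1.isHermitian) (fun a => (hρ a).ne_zero)
    fun _ _ => mul_eq_zero_of_fits_trace hρ hE hfit

theorem stmt3 {n : ℕ} (G : SimpleGraph (Fin n)) :
    (∃ ψ : GVert n → Fin 3 → (Fin 3 → ℂ),
        Fits (triDec (gadgetGraph G))
          (Matrix.of fun a b : GVert n × Fin 3 =>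
            (‖∑ j, (starRingEnd ℂ) (ψ a.1 a.2 j) * ψ b.1 b.2 j‖) ^ 2)) ↔
      ∃ (ρ : GVert n → Fin 3 → Matrix (Fin 3) (Fin 3) ℂ)
        (E : GVert n → Fin 3 → Matrix (Fin 3) (Fin 3) ℂ),
        (∀ y z, IsState (ρ y z)) ∧ (∀ y', IsPOVM (E y')) ∧
        Fits (triDec (gadgetGraph G))
          (Matrix.of fun a b : GVert n × Fin 3 => (ρ a.1 a.2 * E b.1 b.2).trace) := by
  constructor
  · rintro ⟨ψ, hψ⟩
    exact exists_states_povms_fits_of_fits_overlap _ (fun w _ _ => triDec_adj_of_ne _ w) ψ hψ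
  · rintro ⟨ρ, E, hρ, hE, hfit⟩
    obtain ⟨ψ, hψ⟩ := exists_fits_overlap_of_fits_trace (H := triDec (gadgetGraph G))
      (fun a => hρ a.1 a.2) (fun a => ⟨(hE a.1).1 a.2, (hE a.1).posSemidef_one_sub a.2⟩) hfit
    exact ⟨fun y z => ψ (y, z), hψ⟩
end

section
/- Let Z ≥ 2 and let c_1, ..., c_Z be positive integers; set N = ∑_{j=1}^Z c_j². The following are equivalent: (i) there exist signs s_1, ..., s_Z ∈ {−1, +1} with ∑_{j=1}^Z s_j c_j = 0; (ii) there exist real Z-dimensional quantum states ρ_1, ..., ρ_{2Z} and two real Z-dimensional POVMs (E_{1,1}, ..., E_{1,Z}) and (E_{2,1}, ..., E_{2,Z}) such that: tr(ρ_x E_{1,z}) = δ_{x,z} for all x, z ∈ {1,...,Z}; tr(ρ_{Z+x} E_{2,z}) = δ_{x,z} for all x, z ∈ {1,...,Z}; tr(ρ_x E_{2,1}) = c_x²/N and tr(ρ_x E_{2,2}) = 1/Z for all x ∈ {1,...,Z}; and tr(ρ_{Z+1} E_{1,z}) = c_z²/N and tr(ρ_{Z+2} E_{1,z}) = 1/Z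 for all z ∈ {1,...,Z}. -/
/-!
Perfect discrimination rigidifies both measurements. Since `tr(ρE) ≤ tr ρ · tr E` for positive
semidefinite `ρ, E`, the condition `tr(ρ_z E_z) = 1` gives `tr E_z ≥ 1`, and `∑ tr E_z = Z` then
forces `tr E_z = 1`; expanding `tr((ρ_z - E_z)²) ≤ 0` yields `E_z = ρ_z`, and `tr ρ_z² = 1` makes
`ρ_z = u_z u_zᵀ` a pure state. So the first measurement is given by an orthonormal basis `u`, the
second by an orthonormal basis `v`, and the overlap conditions read `⟨u_x, v_1⟩² = c_x² / N` and
`⟨u_x, v_2⟩² = 1 / Z`. Completeness of `u` gives `∑_x ⟨u_x, v_1⟩⟨u_x, v_2⟩ = ⟨v_1, v_2⟩ = 0`, and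
the signs of these products are the required `s_x`, since their moduli are `c_x / √(N Z)`.

Conversely, if `∑ s_j c_j = 0` then `c / √N` and `s / √Z` are orthonormal; extending them to an
orthonormal basis `b` and pairing `b` with the standard basis realises all the conditions.
-/

open Matrix

def IsStateR {d : ℕ} (ρ : Matrix (Fin d) (Fin d) ℝ) : Prop :=
  ρ.PosSemidef ∧ ρ.trace = 1

def IsPOVMR {d Z : ℕ} (E : Fin Z → Matrix (Fin d) (Fin d) ℝ) : Prop :=
  (∀ z, (E z).PosSemidef) ∧ ∑ z, E z = 1

lemma exists_eq_single_of_sum_eq_one_of_sum_sq_eq_one {ι : Type*} [Fintype ι]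
    [DecidableEq ι] {f : ι → ℝ} (hf : ∀ i, 0 ≤ f i) (h₁ : ∑ i, f i = 1) (h₂ : ∑ i, f i ^ 2 = 1) :
    ∃ i, f = Pi.single i 1 := by
  have hle : ∀ i, f i ≤ 1 := fun i =>
    h₁ ▸ Finset.single_le_sum (fun j _ => hf j) (Finset.mem_univ i)
  have hmul : ∀ i, f i * (1 - f i) = 0 := by
    refine fun i => (Finset.sum_eq_zero_iff_of_nonneg fun j _ =>
      mul_nonneg (hf j) (sub_nonneg.2 (hle j))).1 ?_ i (Finset.mem_univ i)
    simp only [mul_sub, mul_one, ← sq, Finset.sum_sub_distrib, h₁, h₂, sub_self]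
  obtain ⟨i, -, hi⟩ := Finset.exists_ne_zero_of_sum_ne_zero (h₁.trans_ne one_ne_zero)
  have hi1 : f i = 1 := by linarith [(mul_eq_zero.1 (hmul i)).resolve_left hi]
  refine ⟨i, funext fun j => ?_⟩
  rcases eq_or_ne j i with rfl | hj
  · simp [hi1]
  · have := Finset.sum_le_sum_of_subset_of_nonneg (Finset.subset_univ {i, j})
      fun k _ _ => hf k
    rw [Finset.sum_pair (Ne.symm hj), h₁, hi1] at this
    simp [hj, le_antisymm (by linarith) (hf j)]

namespace Matrix

variable {n : Type*} [Fintype n]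

lemma trace_vecMulVec_mul_vecMulVec (u v : n → ℝ) :
    (vecMulVec u u * vecMulVec v v).trace = (u ⬝ᵥ v) ^ 2 := by
  rw [vecMulVec_mul_vecMulVec, trace_vecMulVec, dotProduct_smul, smul_eq_mul, sq]

lemma PosSemidef.trace_mul_le_trace_mul_trace {A B : Matrix n n ℝ} (hA : A.PosSemidef)
    (hB : B.PosSemidef) : (A * B).trace ≤ A.trace * B.trace := by
  obtain ⟨k, a, rfl⟩ := posSemidef_iff_eq_sum_vecMulVec.mp hA
  obtain ⟨l, b, rfl⟩ := posSemidef_iff_eq_sum_vecMulVec.mp hB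
  simp only [star_trivial, Finset.sum_mul, Finset.mul_sum, trace_sum,
    trace_vecMulVec_mul_vecMulVec, trace_vecMulVec]
  gcongr with i _ j _
  simpa only [dotProduct, sq] using Finset.sum_mul_sq_le_sq_mul_sq Finset.univ (a j) (b i)

lemma PosSemidef.eq_of_trace_mul_eq_one {A B : Matrix n n ℝ} (hA : A.PosSemidef)
    (hB : B.PosSemidef) (hA₁ : A.trace = 1) (hB₁ : B.trace = 1) (hAB : (A * B).trace = 1) :
    A = B := by
  have hAA := hA.trace_mul_le_trace_mul_trace hA
  have hBB := hB.trace_mul_le_trace_mul_trace hB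
  have hsq : ((A - B)ᴴ * (A - B)).trace = (A * A).trace + (B * B).trace - 2 := by
    rw [(hA.1.sub hB.1).eq, sub_mul, mul_sub, mul_sub, trace_sub, trace_sub, trace_sub,
      trace_mul_comm B A, hAB]
    ring
  rw [← sub_eq_zero, ← trace_conjTranspose_mul_self_eq_zero_iff]
  refine le_antisymm ?_ (posSemidef_conjTranspose_mul_self _).trace_nonneg
  rw [hsq]
  nlinarith

section

variable [DecidableEq n]

lemma sum_dotProduct_mul_dotProduct {ι : Type*} [Fintype ι] {u : ι → n → ℝ}
    (hu : ∑ x, vecMulVec (u x) (u x) = 1) (v w : n → ℝ) :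
    ∑ x, (u x ⬝ᵥ v) * (u x ⬝ᵥ w) = v ⬝ᵥ w := by
  calc ∑ x, (u x ⬝ᵥ v) * (u x ⬝ᵥ w) = v ⬝ᵥ ((∑ x, vecMulVec (u x) (u x)) *ᵥ w) := by
        simp [Matrix.sum_mulVec, dotProduct_sum, vecMulVec_mulVec, dotProduct_comm, mul_comm]
    _ = v ⬝ᵥ w := by rw [hu, one_mulVec]

lemma IsHermitian.eq_mul_diagonal_mul_star {A : Matrix n n ℝ} (hA : A.IsHermitian) :
    A = (hA.eigenvectorUnitary : Matrix n n ℝ) * diagonal hA.eigenvalues *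
      star (hA.eigenvectorUnitary : Matrix n n ℝ) := by
  simpa [Unitary.conjStarAlgAut_apply] using hA.spectral_theorem

lemma IsHermitian.trace_mul_self {A : Matrix n n ℝ} (hA : A.IsHermitian) :
    (A * A).trace = ∑ i, hA.eigenvalues i ^ 2 := by
  have hU : star (hA.eigenvectorUnitary : Matrix n n ℝ) * hA.eigenvectorUnitary = 1 :=
    Unitary.coe_star_mul_self _
  conv_lhs => rw [hA.eq_mul_diagonal_mul_star]
  rw [Matrix.mul_assoc, ← Matrix.mul_assoc (star _), ← Matrix.mul_assoc (star _), hU,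
    Matrix.one_mul, trace_mul_cycle, Matrix.mul_assoc (diagonal _), hU, Matrix.mul_one,
    diagonal_mul_diagonal, trace_diagonal]
  simp [sq]

lemma PosSemidef.exists_eq_vecMulVec_self {A : Matrix n n ℝ} (hA : A.PosSemidef)
    (h₁ : A.trace = 1) (h₂ : (A * A).trace = 1) : ∃ u, A = vecMulVec u u := by
  obtain ⟨i, hi⟩ := exists_eq_single_of_sum_eq_one_of_sum_sq_eq_one hA.eigenvalues_nonneg
    (by simpa [hA.1.trace_eq_sum_eigenvalues] using h₁) (hA.1.trace_mul_self ▸ h₂)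
  have hdiag : diagonal (Pi.single i 1 : n → ℝ) = vecMulVec (Pi.single i 1) (Pi.single i 1) := by
    rw [diagonal_single, single_eq_single_vecMulVec_single]
  refine ⟨hA.1.eigenvectorBasis i, ?_⟩
  conv_lhs => rw [hA.1.eq_mul_diagonal_mul_star]
  rw [hi, hdiag, mul_vecMulVec, vecMulVec_mul,
    star_eq_conjTranspose, conjTranspose_eq_transpose_of_trivial, vecMul_transpose,
    IsHermitian.eigenvectorUnitary_mulVec]

end

end Matrix

namespace OrthonormalBasis

variable {ι : Type*} [Fintype ι] [DecidableEq ι]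

lemma sum_vecMulVec_self (b : OrthonormalBasis ι ℝ (EuclideanSpace ℝ ι)) :
    ∑ i, vecMulVec (b i : ι → ℝ) (b i) = 1 := by
  have := congrArg (fun T : EuclideanSpace ℝ ι →L[ℝ] EuclideanSpace ℝ ι =>
    toEuclideanLin.symm T.toLinearMap) b.sum_rankOne_eq_id
  simp only [ContinuousLinearMap.toLinearMap_sum, map_sum,
    InnerProductSpace.symm_toEuclideanLin_rankOne, star_trivial] at this
  rw [this, ContinuousLinearMap.coe_id, ← toLpLin_one, LinearEquiv.symm_apply_apply]

lemma dotProduct_eq_ite (b : OrthonormalBasis ι ℝ (EuclideanSpace ℝ ι)) (i j : ι) :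
    (b i : ι → ℝ) ⬝ᵥ b j = if i = j then 1 else 0 := by
  rw [← b.inner_eq_ite, EuclideanSpace.inner_eq_star_dotProduct, star_trivial, dotProduct_comm]

lemma trace_vecMulVec_mul_vecMulVec (b : OrthonormalBasis ι ℝ (EuclideanSpace ℝ ι)) (i j : ι) :
    (vecMulVec (b i : ι → ℝ) (b i) * vecMulVec (b j : ι → ℝ) (b j)).trace =
      if i = j then 1 else 0 := by
  rw [Matrix.trace_vecMulVec_mul_vecMulVec, b.dotProduct_eq_ite]
  split_ifs <;> norm_num

end OrthonormalBasis

lemma exists_orthonormalBasis_extension_pair {E : Type*} [NormedAddCommGroup E]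
    [InnerProductSpace ℝ E] [FiniteDimensional ℝ E] {ι : Type*} [Fintype ι]
    (hcard : Module.finrank ℝ E = Fintype.card ι) {i j : ι} (hij : i ≠ j) {v w : E}
    (hv : ‖v‖ = 1) (hw : ‖w‖ = 1) (hvw : inner ℝ v w = 0) :
    ∃ b : OrthonormalBasis ι ℝ E, b i = v ∧ b j = w := by
  classical
  let f : ι → E := fun k => if k = i then v else w
  have hf : Orthonormal ℝ (({i, j} : Set ι).domRestrict f) := by
    rw [orthonormal_iff_ite]
    rintro ⟨k, rfl | rfl⟩ ⟨l, rfl | rfl⟩ <;>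
      simp [f, Set.domRestrict_apply, Subtype.ext_iff, hij, hij.symm, hv, hw, hvw,
        real_inner_comm v w]
  obtain ⟨b, hb⟩ := hf.exists_orthonormalBasis_extension_of_card_eq hcard
  exact ⟨b, by simpa [f] using hb i (by simp), by simpa [f, hij.symm] using hb j (by simp)⟩

lemma exists_signed_sum_eq_zero_of_sq_eq {ι : Type*} [Fintype ι] {c : ι → ℕ} {t : ι → ℝ} {a : ℝ}
    (ha : 0 < a) (ht : ∀ j, t j ^ 2 = a * c j ^ 2) (hsum : ∑ j, t j = 0) :
    ∃ s : ι → ℤ, (∀ j, s j = 1 ∨ s j = -1) ∧ ∑ j, s j * (c j : ℤ) = 0 := by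
  set s : ι → ℤ := fun j => if 0 ≤ t j then 1 else -1
  have habs : ∀ j, |t j| = √a * c j := fun j => by
    rw [← Real.sqrt_sq_eq_abs, ht, Real.sqrt_mul ha.le, Real.sqrt_sq (Nat.cast_nonneg _)]
  have hst : ∀ j, (s j * c j : ℝ) * √a = t j := fun j => by
    rw [mul_assoc, mul_comm (c j : ℝ), ← habs]
    by_cases h : 0 ≤ t j
    · simp [s, h, abs_of_nonneg h]
    · simp [s, h, abs_of_neg (not_le.1 h)]
  refine ⟨s, fun j => by by_cases h : 0 ≤ t j <;> simp [s, h], ?_⟩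
  have : ((∑ j, s j * c j : ℤ) : ℝ) * √a = 0 := by
    push_cast
    rw [Finset.sum_mul]
    simp only [hst, hsum]
  exact_mod_cast (mul_eq_zero.1 this).resolve_right (Real.sqrt_pos.2 ha).ne'

section

variable {d : ℕ}

lemma OrthonormalBasis.isStateR_vecMulVec
    (b : OrthonormalBasis (Fin d) ℝ (EuclideanSpace ℝ (Fin d))) (x : Fin d) :
    IsStateR (vecMulVec (b x : Fin d → ℝ) (b x)) :=
  ⟨by simpa using posSemidef_vecMulVec_self_star (b x : Fin d → ℝ), by
    rw [trace_vecMulVec, b.dotProduct_eq_ite, if_pos rfl]⟩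

lemma OrthonormalBasis.isPOVMR_vecMulVec
    (b : OrthonormalBasis (Fin d) ℝ (EuclideanSpace ℝ (Fin d))) :
    IsPOVMR fun x => vecMulVec (b x : Fin d → ℝ) (b x) :=
  ⟨fun x => by simpa using posSemidef_vecMulVec_self_star (b x : Fin d → ℝ), b.sum_vecMulVec_self⟩

lemma IsPOVMR.eq_of_trace_mul_eq_one {ρ E : Fin d → Matrix (Fin d) (Fin d) ℝ}
    (hρ : ∀ x, IsStateR (ρ x)) (hE : IsPOVMR E) (h : ∀ x, (ρ x * E x).trace = 1) : E = ρ := by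
  have hge : ∀ x, 1 ≤ (E x).trace := fun x => by
    simpa [h x, (hρ x).2] using (hρ x).1.trace_mul_le_trace_mul_trace (hE.1 x)
  have hsum : ∑ _x : Fin d, (1 : ℝ) = ∑ x, (E x).trace := by simp [← trace_sum, hE.2]
  funext x
  refine ((hρ x).1.eq_of_trace_mul_eq_one (hE.1 x) (hρ x).2 ?_ (h x)).symm
  exact ((Finset.sum_eq_sum_iff_of_le fun x _ => hge x).1 hsum x (Finset.mem_univ x)).symm

lemma IsPOVMR.exists_eq_vecMulVec_of_trace_mul_eq_ite {ρ E : Fin d → Matrix (Fin d) (Fin d) ℝ}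
    (hρ : ∀ x, IsStateR (ρ x)) (hE : IsPOVMR E)
    (h : ∀ x z, (ρ x * E z).trace = if x = z then 1 else 0) :
    ∃ u : Fin d → Fin d → ℝ, ∀ x, ρ x = vecMulVec (u x) (u x) ∧ E x = vecMulVec (u x) (u x) := by
  have hEρ := hE.eq_of_trace_mul_eq_one hρ fun x => by simpa using h x x
  choose u hu using fun x =>
    (hρ x).1.exists_eq_vecMulVec_self (hρ x).2 (by simpa [hEρ] using h x x)
  exact ⟨u, fun x => ⟨hu x, hEρ ▸ hu x⟩⟩

end

lemma exists_orthonormalBasis_sq_apply_of_signed_sum_eq_zero {Z : ℕ} (hZ : 2 ≤ Z)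
    {c : Fin Z → ℕ} (hN : 0 < ∑ j, (c j : ℝ) ^ 2) {s : Fin Z → ℤ}
    (hs : ∀ j, s j = 1 ∨ s j = -1) (hsum : ∑ j, s j * (c j : ℤ) = 0) :
    ∃ b : OrthonormalBasis (Fin Z) ℝ (EuclideanSpace ℝ (Fin Z)),
      (∀ j, b ⟨0, by omega⟩ j ^ 2 = (c j : ℝ) ^ 2 / ∑ j, (c j : ℝ) ^ 2) ∧
      (∀ j, b ⟨1, by omega⟩ j ^ 2 = 1 / (Z : ℝ)) := by
  set N := ∑ j, (c j : ℝ) ^ 2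
  have hZ₀ : (0 : ℝ) < Z := by exact_mod_cast (by omega : 0 < Z)
  have hs₂ : ∀ j, (s j : ℝ) ^ 2 = 1 := fun j => by rcases hs j with h | h <;> simp [h]
  have hsum' : ∑ j, (s j : ℝ) * c j = 0 := by exact_mod_cast hsum
  let w₀ : EuclideanSpace ℝ (Fin Z) := WithLp.toLp 2 fun j => c j / √N
  let w₁ : EuclideanSpace ℝ (Fin Z) := WithLp.toLp 2 fun j => s j / √Z
  have hw₀ : ‖w₀‖ = 1 := by
    simp [w₀, EuclideanSpace.norm_eq, div_pow, Real.sq_sqrt hN.le, ← Finset.sum_div, N, hN.ne']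
  have hw₁ : ‖w₁‖ = 1 := by
    simp [w₁, EuclideanSpace.norm_eq, div_pow, Real.sq_sqrt hZ₀.le, hs₂, hZ₀.ne']
  have hw₀₁ : inner ℝ w₀ w₁ = 0 := by
    simp [w₀, w₁, EuclideanSpace.inner_toLp_toLp, dotProduct, div_mul_div_comm,
      ← Finset.sum_div, hsum']
  obtain ⟨b, hb₀, hb₁⟩ := exists_orthonormalBasis_extension_pair
    (i := (⟨0, by omega⟩ : Fin Z)) (j := ⟨1, by omega⟩) (by simp) (by simp) hw₀ hw₁ hw₀₁
  refine ⟨b, fun j => ?_, fun j => ?_⟩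
  · simp [hb₀, w₀, div_pow, Real.sq_sqrt hN.le, N]
  · simp [hb₁, w₁, div_pow, Real.sq_sqrt hZ₀.le, hs₂]

/-- States `ρ_1, …, ρ_{2Z}` are encoded as two families `ρ x = ρ_x` and `σ x = ρ_{Z+x}`
for `x ∈ {1,…,Z}`. -/
theorem stmt7 {Z : ℕ} (hZ : 2 ≤ Z) (c : Fin Z → ℕ) (hc : ∀ j, 0 < c j) :
    (∃ s : Fin Z → ℤ, (∀ j, s j = 1 ∨ s j = -1) ∧ ∑ j, s j * (c j : ℤ) = 0) ↔
      ∃ (ρ σ : Fin Z → Matrix (Fin Z) (Fin Z) ℝ)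
        (E₁ E₂ : Fin Z → Matrix (Fin Z) (Fin Z) ℝ),
        (∀ x, IsStateR (ρ x)) ∧ (∀ x, IsStateR (σ x)) ∧
        IsPOVMR E₁ ∧ IsPOVMR E₂ ∧
        (∀ x z, (ρ x * E₁ z).trace = if x = z then 1 else 0) ∧
        (∀ x z, (σ x * E₂ z).trace = if x = z then 1 else 0) ∧
        (∀ x, (ρ x * E₂ ⟨0, by omega⟩).trace = (c x : ℝ) ^ 2 / ∑ j, (c j : ℝ) ^ 2) ∧
        (∀ x, (ρ x * E₂ ⟨1, by omega⟩).trace = 1 / (Z : ℝ)) ∧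
        (∀ z, (σ ⟨0, by omega⟩ * E₁ z).trace = (c z : ℝ) ^ 2 / ∑ j, (c j : ℝ) ^ 2) ∧
        (∀ z, (σ ⟨1, by omega⟩ * E₁ z).trace = 1 / (Z : ℝ)) := by
  have hN : 0 < ∑ j, (c j : ℝ) ^ 2 :=
    Finset.sum_pos (fun j _ => by have := hc j; positivity) ⟨⟨0, by omega⟩, Finset.mem_univ _⟩
  constructor
  · rintro ⟨s, hs, hsum⟩
    obtain ⟨b, hb₀, hb₁⟩ := exists_orthonormalBasis_sq_apply_of_signed_sum_eq_zero hZ hN hs hsum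
    let e := EuclideanSpace.basisFun (Fin Z) ℝ
    refine ⟨fun x => vecMulVec (e x : Fin Z → ℝ) (e x), fun x => vecMulVec (b x : Fin Z → ℝ) (b x),
      fun x => vecMulVec (e x : Fin Z → ℝ) (e x), fun x => vecMulVec (b x : Fin Z → ℝ) (b x),
      e.isStateR_vecMulVec, b.isStateR_vecMulVec, e.isPOVMR_vecMulVec, b.isPOVMR_vecMulVec,
      e.trace_vecMulVec_mul_vecMulVec, b.trace_vecMulVec_mul_vecMulVec,
      fun x => ?_, fun x => ?_, fun z => ?_, fun z => ?_⟩ <;>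
      simp [trace_vecMulVec_mul_vecMulVec, e, hb₀, hb₁]
  · rintro ⟨ρ, σ, E₁, E₂, hρ, hσ, hE₁, hE₂, hρE₁, hσE₂, hρE₂₀, hρE₂₁, -, -⟩
    obtain ⟨u, hu⟩ := hE₁.exists_eq_vecMulVec_of_trace_mul_eq_ite hρ hρE₁
    obtain ⟨v, hv⟩ := hE₂.exists_eq_vecMulVec_of_trace_mul_eq_ite hσ hσE₂
    have hu₁ : ∑ x, vecMulVec (u x) (u x) = 1 := by simpa [hu] using hE₁.2
    have hv₀₁ : v ⟨0, by omega⟩ ⬝ᵥ v ⟨1, by omega⟩ = 0 := by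
      simpa [hv, trace_vecMulVec_mul_vecMulVec, Fin.ext_iff] using
        hσE₂ ⟨0, by omega⟩ ⟨1, by omega⟩
    refine exists_signed_sum_eq_zero_of_sq_eq
      (t := fun x => (u x ⬝ᵥ v ⟨0, by omega⟩) * (u x ⬝ᵥ v ⟨1, by omega⟩))
      (a := (∑ j, (c j : ℝ) ^ 2)⁻¹ * (Z : ℝ)⁻¹) (by positivity) (fun x => ?_)
      ((sum_dotProduct_mul_dotProduct hu₁ _ _).trans hv₀₁)
    have h₀ := hρE₂₀ x
    have h₁ := hρE₂₁ x
    simp only [hu, hv, trace_vecMulVec_mul_vecMulVec] at h₀ h₁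
    rw [mul_pow, h₀, h₁]
    ring
end

section
/- Let (E_1,...,E_d) be a d-dimensional POVM with d outcomes such that ‖E_j‖ ≥ 1 for all j ∈ {1,...,d}, where ‖·‖ denotes the operator norm. Then there exists an orthonormal basis (ψ_1,...,ψ_d) of ℂ^d such that E_j = ψ_j ψ_j* (the rank-one orthogonal projection onto ℂψ_j) for all j. -/
/-! Since the other effects sum to `1 - E j`, we have `0 ≤ E j ≤ 1`, so `‖E j‖ = 1` lies in the
spectrum of `E j`; let `ψ j` be a unit eigenvector for it. Then
`0 = ⟪ψ j, (1 - E j) ψ j⟫ = ∑_{i ≠ j} ⟪ψ j, E i ψ j⟫` forces `E i ψ j = 0` for `i ≠ j`, which makes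
the `ψ j` orthonormal. Hence `∑ k, ψ k ψ k* = 1` and `E j = ∑ k, (E j ψ k) ψ k* = ψ j ψ j*`. -/

open Matrix
open scoped ComplexOrder

-- `‖·‖` is the L2 operator norm (largest singular value) on matrices.
open scoped Matrix.Norms.L2Operator

/-- The rank-one matrix `ψψ*` with entries `ψ_k ⬝ conj (ψ_l)`. -/
def outer {d : ℕ} (ψ : Fin d → ℂ) : Matrix (Fin d) (Fin d) ℂ :=
  Matrix.of fun k l => ψ k * (starRingEnd ℂ) (ψ l)

open scoped MatrixOrder

lemma Matrix.PosSemidef.exists_mulVec_eq_self_of_one_le_norm {n : Type*} [Fintype n]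
    [DecidableEq n] {A : Matrix n n ℂ} (hA : A.PosSemidef) (hA₁ : (1 - A).PosSemidef)
    (hnorm : 1 ≤ ‖A‖) :
    ∃ v : n → ℂ, star v ⬝ᵥ v = 1 ∧ A *ᵥ v = v := by
  have : Nontrivial (Matrix n n ℂ) := nontrivial_of_ne A 0 (by rintro rfl; norm_num at hnorm)
  have hnorm_eq : ‖A‖ = 1 := le_antisymm
    ((CStarAlgebra.norm_le_iff_le_algebraMap A zero_le_one hA.nonneg).2
      (by simpa [le_iff] using hA₁))
    hnorm
  have hmem : (1 : ℝ) ∈ spectrum ℝ A :=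
    hnorm_eq ▸ CStarAlgebra.norm_mem_spectrum_of_nonneg hA.nonneg
  obtain ⟨i, hi⟩ := hA.isHermitian.spectrum_real_eq_range_eigenvalues ▸ hmem
  refine ⟨hA.isHermitian.eigenvectorBasis i, ?_, ?_⟩
  · rw [dotProduct_comm, ← EuclideanSpace.inner_eq_star_dotProduct, inner_self_eq_norm_sq_to_K,
      hA.isHermitian.eigenvectorBasis.orthonormal.1 i]
    simp
  · simpa [hi] using hA.isHermitian.mulVec_eigenvectorBasis i

lemma Matrix.IsHermitian.star_dotProduct_eq_zero_of_mulVec_eq_zero_of_mulVec_eq_self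
    {n : Type*} [Fintype n] {A : Matrix n n ℂ} (hA : A.IsHermitian) {v w : n → ℂ}
    (hv : A *ᵥ v = 0) (hw : A *ᵥ w = w) : star v ⬝ᵥ w = 0 := by
  rw [← hw, dotProduct_mulVec, ← hA.eq, ← star_mulVec, hv, star_zero, zero_dotProduct]

section SumEqOne

variable {n ι : Type*} [DecidableEq n] [Fintype ι] [DecidableEq ι] {E : ι → Matrix n n ℂ}

lemma Matrix.posSemidef_one_sub_of_sum_eq_one (hE : ∀ i, (E i).PosSemidef) (hsum : ∑ i, E i = 1)
    (j : ι) : (1 - E j).PosSemidef := by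
  rw [← hsum, ← Finset.sum_erase_eq_sub (Finset.mem_univ j)]
  exact Matrix.posSemidef_sum _ fun i _ => hE i

variable [Fintype n]

lemma Matrix.mulVec_eq_zero_of_sum_eq_one_of_mulVec_eq_self (hE : ∀ i, (E i).PosSemidef)
    (hsum : ∑ i, E i = 1) {j : ι} {v : n → ℂ} (hv : E j *ᵥ v = v) {i : ι} (hij : i ≠ j) :
    E i *ᵥ v = 0 := by
  have hzero : ∑ k ∈ Finset.univ.erase j, star v ⬝ᵥ E k *ᵥ v = 0 := by
    rw [← dotProduct_sum, ← sum_mulVec, Finset.sum_erase_eq_sub (Finset.mem_univ j), hsum,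
      sub_mulVec, hv, one_mulVec, sub_self, dotProduct_zero]
  refine ((hE i).dotProduct_mulVec_zero_iff v).1 ?_
  exact (Finset.sum_eq_zero_iff_of_nonneg fun k _ => (hE k).dotProduct_mulVec_nonneg v).1 hzero i
    (Finset.mem_erase.2 ⟨hij, Finset.mem_univ i⟩)

lemma Matrix.star_dotProduct_eq_ite_of_sum_eq_one (hE : ∀ i, (E i).PosSemidef)
    (hsum : ∑ i, E i = 1) {ψ : ι → n → ℂ} (hunit : ∀ j, star (ψ j) ⬝ᵥ ψ j = 1)
    (heig : ∀ j, E j *ᵥ ψ j = ψ j) (j k : ι) :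
    star (ψ j) ⬝ᵥ ψ k = if j = k then 1 else 0 := by
  split_ifs with hjk
  · exact hjk ▸ hunit j
  · exact (hE k).isHermitian.star_dotProduct_eq_zero_of_mulVec_eq_zero_of_mulVec_eq_self
      (mulVec_eq_zero_of_sum_eq_one_of_mulVec_eq_self hE hsum (heig j) (Ne.symm hjk)) (heig k)

end SumEqOne

lemma outer_eq_vecMulVec {d : ℕ} (ψ : Fin d → ℂ) : outer ψ = vecMulVec ψ (star ψ) := rfl

lemma sum_outer_eq_one {d : ℕ} {ψ : Fin d → Fin d → ℂ}
    (hψ : ∀ j k, (∑ l, (starRingEnd ℂ) (ψ j l) * ψ k l) = if j = k then 1 else 0) :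
    ∑ k, outer (ψ k) = 1 := by
  -- `U` has columns `ψ k`; a left inverse of a square matrix is also a right inverse.
  let U : Matrix (Fin d) (Fin d) ℂ := of fun l k => ψ k l
  have hU : Uᴴ * U = 1 := by
    ext j k
    simpa [U, mul_apply, one_apply] using hψ j k
  ext a b
  simpa [U, outer, mul_apply, Matrix.sum_apply] using congr($(mul_eq_one_comm.1 hU) a b)

theorem stmt9 {d : ℕ} (E : Fin d → Matrix (Fin d) (Fin d) ℂ) (hE : IsPOVM E)
    (hnorm : ∀ j, 1 ≤ ‖E j‖) :
    ∃ ψ : Fin d → (Fin d → ℂ),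
      (∀ j k, (∑ l, (starRingEnd ℂ) (ψ j l) * ψ k l) = if j = k then 1 else 0) ∧
      ∀ j, E j = outer (ψ j) := by
  obtain ⟨hpsd, hsum⟩ := hE
  choose ψ hunit heig using fun j => (hpsd j).exists_mulVec_eq_self_of_one_le_norm
    (posSemidef_one_sub_of_sum_eq_one hpsd hsum j) (hnorm j)
  have hortho : ∀ j k, (∑ l, (starRingEnd ℂ) (ψ j l) * ψ k l) = if j = k then 1 else 0 :=
    star_dotProduct_eq_ite_of_sum_eq_one hpsd hsum hunit heig
  refine ⟨ψ, hortho, fun j => ?_⟩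
  calc E j = E j * ∑ k, outer (ψ k) := by rw [sum_outer_eq_one hortho, mul_one]
    _ = ∑ k, vecMulVec (E j *ᵥ ψ k) (star (ψ k)) := by
      simp only [Finset.mul_sum, outer_eq_vecMulVec, mul_vecMulVec]
    _ = outer (ψ j) := by
      rw [Finset.sum_eq_single j (fun k _ hkj => ?_) (by simp), heig, outer_eq_vecMulVec]
      rw [mulVec_eq_zero_of_sum_eq_one_of_mulVec_eq_self hpsd hsum (heig k) (Ne.symm hkj),
        zero_vecMulVec]
end

section
/- Order the vertices of H_{ij} as (i, a_{ij}, b_{ij}, c_{ij}, d_{ij}, j), identified with indices 1,...,6. A 6×6 complex matrix A fits H_{ij} and satisfies rank(A) ≤ 3 if and only if there exist nonzero a, b, c ∈ ℂ such that A = M(a,b,c) or A = M'(a,b,c), where M(a,b,c) is the matrix with all diagonal entries equal to 1, entries M_{1,6} = a, M_{6,1} = a^{-1}, M_{2,4} = b, M_{4,2} = b^{-1}, M_{3,5} = c, M_{5,3} = c^{-1}, and all other entries 0, and M'(a,b,c) is the matrix with all diagonal entries equal to 1, entries M'_{1,4} = a, M'_{4,1} = a^{-1}, M'_{2,5} = b,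 M'_{5,2} = b^{-1}, M'_{3,6} = c, M'_{6,3} = c^{-1}, and all other entries 0. Moreover, every such matrix has rank exactly 3. -/
open Matrix
open scoped ComplexOrder

/-- The gadget graph `H_{ij}` on six vertices `i = 0`, `a_{ij} = 1`, `b_{ij} = 2`,
`c_{ij} = 3`, `d_{ij} = 4`, `j = 5`, with the nine edges
`{i,a},{i,b},{i,d},{a,b},{a,j},{b,c},{c,d},{c,j},{d,j}`. -/
def Hgadget : SimpleGraph (Fin 6) :=
  SimpleGraph.fromRel fun v w =>
    (v, w) ∈ [((0 : Fin 6), (1 : Fin 6)), (0, 2), (0, 4), (1, 2), (1, 5),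
      (2, 3), (3, 4), (3, 5), (4, 5)]
/-- The matrix `M(a,b,c)`. -/
noncomputable def Mmat (a b c : ℂ) : Matrix (Fin 6) (Fin 6) ℂ :=
  !![1, 0, 0, 0, 0, a;
     0, 1, 0, b, 0, 0;
     0, 0, 1, 0, c, 0;
     0, b⁻¹, 0, 1, 0, 0;
     0, 0, c⁻¹, 0, 1, 0;
     a⁻¹, 0, 0, 0, 0, 1]

/-- The matrix `M'(a,b,c)`. -/
noncomputable def M'mat (a b c : ℂ) : Matrix (Fin 6) (Fin 6) ℂ :=
  !![1, 0, 0, a, 0, 0;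
     0, 1, 0, 0, b, 0;
     0, 0, 1, 0, 0, c;
     a⁻¹, 0, 0, 1, 0, 0;
     0, b⁻¹, 0, 0, 1, 0;
     0, 0, c⁻¹, 0, 0, 1]


private lemma v6c {α : Type*} (a b c d e f : α) :
    (![a,b,c,d,e,f] 0 = a) ∧ (![a,b,c,d,e,f] 1 = b) ∧ (![a,b,c,d,e,f] 2 = c) ∧
    (![a,b,c,d,e,f] 3 = d) ∧ (![a,b,c,d,e,f] 4 = e) ∧ (![a,b,c,d,e,f] 5 = f) :=
  ⟨rfl, rfl, rfl, rfl, rfl, rfl⟩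

private lemma v6_0 {α : Type*} (a b c d e f : α) : ![a,b,c,d,e,f] 0 = a := rfl
private lemma v6_1 {α : Type*} (a b c d e f : α) : ![a,b,c,d,e,f] 1 = b := rfl
private lemma v6_2 {α : Type*} (a b c d e f : α) : ![a,b,c,d,e,f] 2 = c := rfl
private lemma v6_3 {α : Type*} (a b c d e f : α) : ![a,b,c,d,e,f] 3 = d := rfl
private lemma v6_4 {α : Type*} (a b c d e f : α) : ![a,b,c,d,e,f] 4 = e := rfl
private lemma v6_5 {α : Type*} (a b c d e f : α) : ![a,b,c,d,e,f] 5 = f := rfl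
private lemma v3_0 {α : Type*} (a b c : α) : ![a,b,c] 0 = a := rfl
private lemma v3_1 {α : Type*} (a b c : α) : ![a,b,c] 1 = b := rfl
private lemma v3_2 {α : Type*} (a b c : α) : ![a,b,c] 2 = c := rfl

private lemma v6m_0 {α : Type*} (a b c d e f : α) (h : 0 < 6) : ![a,b,c,d,e,f] ⟨0, h⟩ = a := rfl
private lemma v6m_1 {α : Type*} (a b c d e f : α) (h : 1 < 6) : ![a,b,c,d,e,f] ⟨1, h⟩ = b := rfl
private lemma v6m_2 {α : Type*} (a b c d e f : α) (h : 2 < 6) : ![a,b,c,d,e,f] ⟨2, h⟩ = c := rfl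
private lemma v6m_3 {α : Type*} (a b c d e f : α) (h : 3 < 6) : ![a,b,c,d,e,f] ⟨3, h⟩ = d := rfl
private lemma v6m_4 {α : Type*} (a b c d e f : α) (h : 4 < 6) : ![a,b,c,d,e,f] ⟨4, h⟩ = e := rfl
private lemma v6m_5 {α : Type*} (a b c d e f : α) (h : 5 < 6) : ![a,b,c,d,e,f] ⟨5, h⟩ = f := rfl
private lemma v3m_0 {α : Type*} (a b c : α) (h : 0 < 3) : ![a,b,c] ⟨0, h⟩ = a := rfl
private lemma v3m_1 {α : Type*} (a b c : α) (h : 1 < 3) : ![a,b,c] ⟨1, h⟩ = b := rfl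
private lemma v3m_2 {α : Type*} (a b c : α) (h : 2 < 3) : ![a,b,c] ⟨2, h⟩ = c := rfl
private lemma v4m_0 {α : Type*} (a b c d : α) (h : 0 < 4) : ![a,b,c,d] ⟨0, h⟩ = a := rfl
private lemma v4m_1 {α : Type*} (a b c d : α) (h : 1 < 4) : ![a,b,c,d] ⟨1, h⟩ = b := rfl
private lemma v4m_2 {α : Type*} (a b c d : α) (h : 2 < 4) : ![a,b,c,d] ⟨2, h⟩ = c := rfl
private lemma v4m_3 {α : Type*} (a b c d : α) (h : 3 < 4) : ![a,b,c,d] ⟨3, h⟩ = d := rfl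

private lemma det_fin_four' (M : Matrix (Fin 4) (Fin 4) ℂ) : M.det = M 0 0*M 1 1*M 2 2*M 3 3 - M 0 0*M 1 1*M 2 3*M 3 2 - M 0 0*M 1 2*M 2 1*M 3 3 + M 0 0*M 1 2*M 2 3*M 3 1 + M 0 0*M 1 3*M 2 1*M 3 2 - M 0 0*M 1 3*M 2 2*M 3 1 - M 0 1*M 1 0*M 2 2*M 3 3 + M 0 1*M 1 0*M 2 3*M 3 2 + M 0 1*M 1 2*M 2 0*M 3 3 - M 0 1*M 1 2*M 2 3*M 3 0 - M 0 1*M 1 3*M 2 0*M 3 2 + M 0 1*M 1 3*M 2 2*M 3 0 + M 0 2*M 1 0*M 2 1*M 3 3 - M 0 2*M 1 0*M 2 3*M 3 1 - M 0 2*M 1 1*M 2 0*M 3 3 + M 0 2*M 1 1*M 2 3*M 3 0 + M 0 2*M 1 3*M 2 0*M 3 1 - M 0 2*M 1 3*M 2 1*M 3 0 - M 0 3*M 1 0*M 2 1*M 3 2 + M 0 3*M 1 0*M 2 2*M 3 1 + M 0 3*M 1 1*M 2 0*M 3 2 - M 0 3*M 1 1*M 2 2*M 3 0 - M 0 3*M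 1 2*M 2 0*M 3 1 + M 0 3*M 1 2*M 2 1*M 3 0 := by
  simp [Matrix.det_succ_row_zero, Fin.sum_univ_succ,
    show ((2:Fin 3).succ = 3) from rfl, show Fin.succAbove (2:Fin 4) 2 = 3 from rfl,
    show Fin.succAbove (1:Fin 4) 2 = 3 from rfl, show Fin.succAbove (3:Fin 4) 2 = 2 from rfl,
    show Fin.castSucc (2:Fin 3) = 2 from rfl]
  ring

private lemma rank_submatrix_le' {k n : ℕ} (A : Matrix (Fin n) (Fin n) ℂ) (f g : Fin k → Fin n) :
    (A.submatrix f g).rank ≤ A.rank := by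
  have h1 : A.submatrix f g =
      ((1 : Matrix (Fin n) (Fin n) ℂ).submatrix f (Equiv.refl (Fin n))) * A *
        ((1 : Matrix (Fin n) (Fin n) ℂ).submatrix (Equiv.refl (Fin n)) g) := by
    rw [Matrix.one_submatrix_mul, Matrix.mul_submatrix_one]
    simp
  rw [h1]
  exact (Matrix.rank_mul_le_left _ _).trans (Matrix.rank_mul_le_right _ _)

private lemma minor_zero {n : ℕ} (A : Matrix (Fin n) (Fin n) ℂ) (h : A.rank ≤ 3)
    (f g : Fin 4 → Fin n) : (A.submatrix f g).det = 0 := by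
  by_contra hd
  have hu : IsUnit (A.submatrix f g) := (Matrix.isUnit_iff_isUnit_det _).2 (Ne.isUnit hd)
  have h4 : (A.submatrix f g).rank = 4 := by
    simpa using Matrix.rank_of_isUnit _ hu
  have := rank_submatrix_le' A f g
  omega

private lemma rank_Mmat (a b c : ℂ) (ha : a ≠ 0) (hb : b ≠ 0) (hc : c ≠ 0) :
    (Mmat a b c).rank = 3 := by
  apply le_antisymm
  · have hBC : Mmat a b c =
        (!![1,0,0; 0,1,0; 0,0,1; 0,b⁻¹,0; 0,0,c⁻¹; a⁻¹,0,0] : Matrix (Fin 6) (Fin 3) ℂ) *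
          (!![1,0,0,0,0,a; 0,1,0,b,0,0; 0,0,1,0,c,0] : Matrix (Fin 3) (Fin 6) ℂ) := by
      ext i j
      fin_cases i <;> fin_cases j <;>
        simp only [Mmat, Matrix.mul_apply, Fin.sum_univ_three, Matrix.of_apply,
          v6_0, v6_1, v6_2, v6_3, v6_4, v6_5, v3_0, v3_1, v3_2, Matrix.of_apply, v6m_0, v6m_1, v6m_2, v6m_3, v6m_4, v6m_5, v3m_0, v3m_1, v3m_2, v4m_0, v4m_1, v4m_2, v4m_3,
          mul_zero, zero_mul, mul_one, one_mul, add_zero, zero_add] <;>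
        first
        | rfl
        | exact (inv_mul_cancel₀ ha).symm
        | exact (inv_mul_cancel₀ hb).symm
        | exact (inv_mul_cancel₀ hc).symm
    rw [hBC]
    have h2 := Matrix.rank_le_card_height
      (!![1,0,0,0,0,a; 0,1,0,b,0,0; 0,0,1,0,c,0] : Matrix (Fin 3) (Fin 6) ℂ)
    exact (Matrix.rank_mul_le_right _ _).trans (by simpa using h2)
  · have h := rank_submatrix_le' (Mmat a b c) ![0,1,2] ![0,1,2]
    have he : (Mmat a b c).submatrix ![0,1,2] ![0,1,2] = (1 : Matrix (Fin 3) (Fin 3) ℂ) := by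
      ext i j
      fin_cases i <;> fin_cases j <;> simp [Mmat, Matrix.one_apply, v6_0, v6_1, v6_2, v6_3, v6_4, v6_5, v3_0, v3_1, v3_2, Matrix.of_apply, v6m_0, v6m_1, v6m_2, v6m_3, v6m_4, v6m_5, v3m_0, v3m_1, v3m_2, v4m_0, v4m_1, v4m_2, v4m_3]
    rw [he, Matrix.rank_one] at h
    simpa using h

private lemma rank_M'mat (a b c : ℂ) (ha : a ≠ 0) (hb : b ≠ 0) (hc : c ≠ 0) :
    (M'mat a b c).rank = 3 := by
  apply le_antisymm
  · have hBC : M'mat a b c =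
        (!![1,0,0; 0,1,0; 0,0,1; a⁻¹,0,0; 0,b⁻¹,0; 0,0,c⁻¹] : Matrix (Fin 6) (Fin 3) ℂ) *
          (!![1,0,0,a,0,0; 0,1,0,0,b,0; 0,0,1,0,0,c] : Matrix (Fin 3) (Fin 6) ℂ) := by
      ext i j
      fin_cases i <;> fin_cases j <;>
        simp only [M'mat, Matrix.mul_apply, Fin.sum_univ_three, Matrix.of_apply,
          v6_0, v6_1, v6_2, v6_3, v6_4, v6_5, v3_0, v3_1, v3_2, Matrix.of_apply, v6m_0, v6m_1, v6m_2, v6m_3, v6m_4, v6m_5, v3m_0, v3m_1, v3m_2, v4m_0, v4m_1, v4m_2, v4m_3,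
          mul_zero, zero_mul, mul_one, one_mul, add_zero, zero_add] <;>
        first
        | rfl
        | exact (inv_mul_cancel₀ ha).symm
        | exact (inv_mul_cancel₀ hb).symm
        | exact (inv_mul_cancel₀ hc).symm
    rw [hBC]
    have h2 := Matrix.rank_le_card_height
      (!![1,0,0,a,0,0; 0,1,0,0,b,0; 0,0,1,0,0,c] : Matrix (Fin 3) (Fin 6) ℂ)
    exact (Matrix.rank_mul_le_right _ _).trans (by simpa using h2)
  · have h := rank_submatrix_le' (M'mat a b c) ![0,1,2] ![0,1,2]
    have he : (M'mat a b c).submatrix ![0,1,2] ![0,1,2] = (1 : Matrix (Fin 3) (Fin 3) ℂ) := by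
      ext i j
      fin_cases i <;> fin_cases j <;> simp [M'mat, Matrix.one_apply, v6_0, v6_1, v6_2, v6_3, v6_4, v6_5, v3_0, v3_1, v3_2, Matrix.of_apply, v6m_0, v6m_1, v6m_2, v6m_3, v6m_4, v6m_5, v3m_0, v3m_1, v3m_2, v4m_0, v4m_1, v4m_2, v4m_3]
    rw [he, Matrix.rank_one] at h
    simpa using h

private lemma fits_Mmat (a b c : ℂ) : Fits Hgadget (Mmat a b c) := by
  constructor
  · intro v; fin_cases v <;> rfl
  · intro v w hvw
    fin_cases v <;> fin_cases w <;>
      first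
      | rfl
      | exact absurd hvw (by simp [Hgadget])

private lemma fits_M'mat (a b c : ℂ) : Fits Hgadget (M'mat a b c) := by
  constructor
  · intro v; fin_cases v <;> rfl
  · intro v w hvw
    fin_cases v <;> fin_cases w <;>
      first
      | rfl
      | exact absurd hvw (by simp [Hgadget])

set_option maxHeartbeats 1600000 in
private lemma forward_lemma (A : Matrix (Fin 6) (Fin 6) ℂ)
    (hone : ∀ v, A v v = 1) (hz : ∀ v w, Hgadget.Adj v w → A v w = 0)
    (hr : A.rank ≤ 3) :
    ∃ a b c : ℂ, a ≠ 0 ∧ b ≠ 0 ∧ c ≠ 0 ∧ (A = Mmat a b c ∨ A = M'mat a b c) := by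

  have e01 : A 0 1 = 0 := hz 0 1 (by simp [Hgadget])
  have e10 : A 1 0 = 0 := hz 1 0 (by simp [Hgadget])
  have e02 : A 0 2 = 0 := hz 0 2 (by simp [Hgadget])
  have e20 : A 2 0 = 0 := hz 2 0 (by simp [Hgadget])
  have e04 : A 0 4 = 0 := hz 0 4 (by simp [Hgadget])
  have e40 : A 4 0 = 0 := hz 4 0 (by simp [Hgadget])
  have e12 : A 1 2 = 0 := hz 1 2 (by simp [Hgadget])
  have e21 : A 2 1 = 0 := hz 2 1 (by simp [Hgadget])
  have e15 : A 1 5 = 0 := hz 1 5 (by simp [Hgadget])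
  have e51 : A 5 1 = 0 := hz 5 1 (by simp [Hgadget])
  have e23 : A 2 3 = 0 := hz 2 3 (by simp [Hgadget])
  have e32 : A 3 2 = 0 := hz 3 2 (by simp [Hgadget])
  have e34 : A 3 4 = 0 := hz 3 4 (by simp [Hgadget])
  have e43 : A 4 3 = 0 := hz 4 3 (by simp [Hgadget])
  have e35 : A 3 5 = 0 := hz 3 5 (by simp [Hgadget])
  have e53 : A 5 3 = 0 := hz 5 3 (by simp [Hgadget])
  have e45 : A 4 5 = 0 := hz 4 5 (by simp [Hgadget])
  have e54 : A 5 4 = 0 := hz 5 4 (by simp [Hgadget])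
  have d0 : A 0 0 = 1 := hone 0
  have d1 : A 1 1 = 1 := hone 1
  have d2 : A 2 2 = 1 := hone 2
  have d3 : A 3 3 = 1 := hone 3
  have d4 : A 4 4 = 1 := hone 4
  have d5 : A 5 5 = 1 := hone 5
  have E1 : A 0 3 * A 3 0 + A 0 5 * A 5 0 = 1 := by
    have m := minor_zero A hr ![0,3,4,5] ![0,3,4,5]
    rw [det_fin_four'] at m
    simp only [Matrix.submatrix_apply, Matrix.cons_val_zero, Matrix.cons_val_one,
      Matrix.head_cons, Matrix.cons_val_two, Matrix.cons_val_three, Matrix.tail_cons,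
      Matrix.head_fin_const, e01, e10, e02, e20, e04, e40, e12, e21, e15, e51, e23, e32, e34, e43, e35, e53, e45, e54, d0, d1, d2, d3, d4, d5, mul_zero, zero_mul, mul_one, one_mul,
      add_zero, zero_add, sub_zero, zero_sub, neg_zero, neg_neg, neg_eq_zero] at m
    first
    | linear_combination m
    | linear_combination -m
  have E2 : A 0 3 * A 3 0 + A 1 3 * A 3 1 = 1 := by
    have m := minor_zero A hr ![0,1,2,3] ![0,1,2,3]
    rw [det_fin_four'] at m
    simp only [Matrix.submatrix_apply, Matrix.cons_val_zero, Matrix.cons_val_one,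
      Matrix.head_cons, Matrix.cons_val_two, Matrix.cons_val_three, Matrix.tail_cons,
      Matrix.head_fin_const, e01, e10, e02, e20, e04, e40, e12, e21, e15, e51, e23, e32, e34, e43, e35, e53, e45, e54, d0, d1, d2, d3, d4, d5, mul_zero, zero_mul, mul_one, one_mul,
      add_zero, zero_add, sub_zero, zero_sub, neg_zero, neg_neg, neg_eq_zero] at m
    first
    | linear_combination m
    | linear_combination -m
  have E3 : A 1 3 * A 3 1 + A 1 4 * A 4 1 = 1 := by
    have m := minor_zero A hr ![1,3,4,5] ![1,3,4,5]
    rw [det_fin_four'] at m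
    simp only [Matrix.submatrix_apply, Matrix.cons_val_zero, Matrix.cons_val_one,
      Matrix.head_cons, Matrix.cons_val_two, Matrix.cons_val_three, Matrix.tail_cons,
      Matrix.head_fin_const, e01, e10, e02, e20, e04, e40, e12, e21, e15, e51, e23, e32, e34, e43, e35, e53, e45, e54, d0, d1, d2, d3, d4, d5, mul_zero, zero_mul, mul_one, one_mul,
      add_zero, zero_add, sub_zero, zero_sub, neg_zero, neg_neg, neg_eq_zero] at m
    first
    | linear_combination m
    | linear_combination -m
  have E4 : A 1 4 * A 4 1 + A 2 4 * A 4 2 = 1 := by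
    have m := minor_zero A hr ![0,1,2,4] ![0,1,2,4]
    rw [det_fin_four'] at m
    simp only [Matrix.submatrix_apply, Matrix.cons_val_zero, Matrix.cons_val_one,
      Matrix.head_cons, Matrix.cons_val_two, Matrix.cons_val_three, Matrix.tail_cons,
      Matrix.head_fin_const, e01, e10, e02, e20, e04, e40, e12, e21, e15, e51, e23, e32, e34, e43, e35, e53, e45, e54, d0, d1, d2, d3, d4, d5, mul_zero, zero_mul, mul_one, one_mul,
      add_zero, zero_add, sub_zero, zero_sub, neg_zero, neg_neg, neg_eq_zero] at m
    first
    | linear_combination m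
    | linear_combination -m
  have E5 : A 0 5 * A 5 0 + A 2 5 * A 5 2 = 1 := by
    have m := minor_zero A hr ![0,1,2,5] ![0,1,2,5]
    rw [det_fin_four'] at m
    simp only [Matrix.submatrix_apply, Matrix.cons_val_zero, Matrix.cons_val_one,
      Matrix.head_cons, Matrix.cons_val_two, Matrix.cons_val_three, Matrix.tail_cons,
      Matrix.head_fin_const, e01, e10, e02, e20, e04, e40, e12, e21, e15, e51, e23, e32, e34, e43, e35, e53, e45, e54, d0, d1, d2, d3, d4, d5, mul_zero, zero_mul, mul_one, one_mul,
      add_zero, zero_add, sub_zero, zero_sub, neg_zero, neg_neg, neg_eq_zero] at m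
    first
    | linear_combination m
    | linear_combination -m
  have E6 : A 2 4 * A 4 2 + A 2 5 * A 5 2 = 1 := by
    have m := minor_zero A hr ![2,3,4,5] ![2,3,4,5]
    rw [det_fin_four'] at m
    simp only [Matrix.submatrix_apply, Matrix.cons_val_zero, Matrix.cons_val_one,
      Matrix.head_cons, Matrix.cons_val_two, Matrix.cons_val_three, Matrix.tail_cons,
      Matrix.head_fin_const, e01, e10, e02, e20, e04, e40, e12, e21, e15, e51, e23, e32, e34, e43, e35, e53, e45, e54, d0, d1, d2, d3, d4, d5, mul_zero, zero_mul, mul_one, one_mul,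
      add_zero, zero_add, sub_zero, zero_sub, neg_zero, neg_neg, neg_eq_zero] at m
    first
    | linear_combination m
    | linear_combination -m
  have PQ : A 0 3 * A 5 0 = 0 := by
    have m := minor_zero A hr ![0,1,2,5] ![0,1,2,3]
    rw [det_fin_four'] at m
    simp only [Matrix.submatrix_apply, Matrix.cons_val_zero, Matrix.cons_val_one,
      Matrix.head_cons, Matrix.cons_val_two, Matrix.cons_val_three, Matrix.tail_cons,
      Matrix.head_fin_const, e01, e10, e02, e20, e04, e40, e12, e21, e15, e51, e23, e32, e34, e43, e35, e53, e45, e54, d0, d1, d2, d3, d4, d5, mul_zero, zero_mul, mul_one, one_mul,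
      add_zero, zero_add, sub_zero, zero_sub, neg_zero, neg_neg, neg_eq_zero] at m
    first
    | linear_combination m
    | linear_combination -m
  have PR : A 0 3 * A 3 1 = 0 := by
    have m := minor_zero A hr ![0,3,4,5] ![1,3,4,5]
    rw [det_fin_four'] at m
    simp only [Matrix.submatrix_apply, Matrix.cons_val_zero, Matrix.cons_val_one,
      Matrix.head_cons, Matrix.cons_val_two, Matrix.cons_val_three, Matrix.tail_cons,
      Matrix.head_fin_const, e01, e10, e02, e20, e04, e40, e12, e21, e15, e51, e23, e32, e34, e43, e35, e53, e45, e54, d0, d1, d2, d3, d4, d5, mul_zero, zero_mul, mul_one, one_mul,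
      add_zero, zero_add, sub_zero, zero_sub, neg_zero, neg_neg, neg_eq_zero] at m
    first
    | linear_combination m
    | linear_combination -m
  have Pt : A 0 3 * A 2 4 = 0 := by
    have m := minor_zero A hr ![0,1,2,5] ![1,3,4,5]
    rw [det_fin_four'] at m
    simp only [Matrix.submatrix_apply, Matrix.cons_val_zero, Matrix.cons_val_one,
      Matrix.head_cons, Matrix.cons_val_two, Matrix.cons_val_three, Matrix.tail_cons,
      Matrix.head_fin_const, e01, e10, e02, e20, e04, e40, e12, e21, e15, e51, e23, e32, e34, e43, e35, e53, e45, e54, d0, d1, d2, d3, d4, d5, mul_zero, zero_mul, mul_one, one_mul,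
      add_zero, zero_add, sub_zero, zero_sub, neg_zero, neg_neg, neg_eq_zero] at m
    first
    | linear_combination m
    | linear_combination -m
  have QP : A 0 5 * A 3 0 = 0 := by
    have m := minor_zero A hr ![0,1,2,3] ![0,1,2,5]
    rw [det_fin_four'] at m
    simp only [Matrix.submatrix_apply, Matrix.cons_val_zero, Matrix.cons_val_one,
      Matrix.head_cons, Matrix.cons_val_two, Matrix.cons_val_three, Matrix.tail_cons,
      Matrix.head_fin_const, e01, e10, e02, e20, e04, e40, e12, e21, e15, e51, e23, e32, e34, e43, e35, e53, e45, e54, d0, d1, d2, d3, d4, d5, mul_zero, zero_mul, mul_one, one_mul,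
      add_zero, zero_add, sub_zero, zero_sub, neg_zero, neg_neg, neg_eq_zero] at m
    first
    | linear_combination m
    | linear_combination -m
  have QU : A 0 5 * A 5 2 = 0 := by
    have m := minor_zero A hr ![0,3,4,5] ![2,3,4,5]
    rw [det_fin_four'] at m
    simp only [Matrix.submatrix_apply, Matrix.cons_val_zero, Matrix.cons_val_one,
      Matrix.head_cons, Matrix.cons_val_two, Matrix.cons_val_three, Matrix.tail_cons,
      Matrix.head_fin_const, e01, e10, e02, e20, e04, e40, e12, e21, e15, e51, e23, e32, e34, e43, e35, e53, e45, e54, d0, d1, d2, d3, d4, d5, mul_zero, zero_mul, mul_one, one_mul,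
      add_zero, zero_add, sub_zero, zero_sub, neg_zero, neg_neg, neg_eq_zero] at m
    first
    | linear_combination m
    | linear_combination -m
  have QS : A 0 5 * A 1 4 = 0 := by
    have m := minor_zero A hr ![0,1,2,3] ![2,3,4,5]
    rw [det_fin_four'] at m
    simp only [Matrix.submatrix_apply, Matrix.cons_val_zero, Matrix.cons_val_one,
      Matrix.head_cons, Matrix.cons_val_two, Matrix.cons_val_three, Matrix.tail_cons,
      Matrix.head_fin_const, e01, e10, e02, e20, e04, e40, e12, e21, e15, e51, e23, e32, e34, e43, e35, e53, e45, e54, d0, d1, d2, d3, d4, d5, mul_zero, zero_mul, mul_one, one_mul,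
      add_zero, zero_add, sub_zero, zero_sub, neg_zero, neg_neg, neg_eq_zero] at m
    first
    | linear_combination m
    | linear_combination -m
  have RS : A 1 3 * A 4 1 = 0 := by
    have m := minor_zero A hr ![0,1,2,4] ![0,1,2,3]
    rw [det_fin_four'] at m
    simp only [Matrix.submatrix_apply, Matrix.cons_val_zero, Matrix.cons_val_one,
      Matrix.head_cons, Matrix.cons_val_two, Matrix.cons_val_three, Matrix.tail_cons,
      Matrix.head_fin_const, e01, e10, e02, e20, e04, e40, e12, e21, e15, e51, e23, e32, e34, e43, e35, e53, e45, e54, d0, d1, d2, d3, d4, d5, mul_zero, zero_mul, mul_one, one_mul,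
      add_zero, zero_add, sub_zero, zero_sub, neg_zero, neg_neg, neg_eq_zero] at m
    first
    | linear_combination m
    | linear_combination -m
  have RU : A 1 3 * A 2 5 = 0 := by
    have m := minor_zero A hr ![0,1,2,4] ![0,3,4,5]
    rw [det_fin_four'] at m
    simp only [Matrix.submatrix_apply, Matrix.cons_val_zero, Matrix.cons_val_one,
      Matrix.head_cons, Matrix.cons_val_two, Matrix.cons_val_three, Matrix.tail_cons,
      Matrix.head_fin_const, e01, e10, e02, e20, e04, e40, e12, e21, e15, e51, e23, e32, e34, e43, e35, e53, e45, e54, d0, d1, d2, d3, d4, d5, mul_zero, zero_mul, mul_one, one_mul,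
      add_zero, zero_add, sub_zero, zero_sub, neg_zero, neg_neg, neg_eq_zero] at m
    first
    | linear_combination m
    | linear_combination -m
  have ST : A 1 4 * A 4 2 = 0 := by
    have m := minor_zero A hr ![1,3,4,5] ![2,3,4,5]
    rw [det_fin_four'] at m
    simp only [Matrix.submatrix_apply, Matrix.cons_val_zero, Matrix.cons_val_one,
      Matrix.head_cons, Matrix.cons_val_two, Matrix.cons_val_three, Matrix.tail_cons,
      Matrix.head_fin_const, e01, e10, e02, e20, e04, e40, e12, e21, e15, e51, e23, e32, e34, e43, e35, e53, e45, e54, d0, d1, d2, d3, d4, d5, mul_zero, zero_mul, mul_one, one_mul,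
      add_zero, zero_add, sub_zero, zero_sub, neg_zero, neg_neg, neg_eq_zero] at m
    first
    | linear_combination m
    | linear_combination -m
  by_cases hx : A 0 3 * A 3 0 = 0
  · -- M case
    have hqQ : A 0 5 * A 5 0 = 1 := by linear_combination E1 - hx
    have hrR : A 1 3 * A 3 1 = 1 := by linear_combination E2 - hx
    have htT : A 2 4 * A 4 2 = 1 := by linear_combination E4 - E3 + E2 - hx
    have hq : A 0 5 ≠ 0 := left_ne_zero_of_mul_eq_one hqQ
    have hrr : A 1 3 ≠ 0 := left_ne_zero_of_mul_eq_one hrR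
    have htt : A 2 4 ≠ 0 := left_ne_zero_of_mul_eq_one htT
    have hP : A 3 0 = 0 := (mul_eq_zero.mp QP).resolve_left hq
    have hU : A 5 2 = 0 := (mul_eq_zero.mp QU).resolve_left hq
    have hs : A 1 4 = 0 := (mul_eq_zero.mp QS).resolve_left hq
    have hS : A 4 1 = 0 := (mul_eq_zero.mp RS).resolve_left hrr
    have hu : A 2 5 = 0 := (mul_eq_zero.mp RU).resolve_left hrr
    have hp : A 0 3 = 0 := (mul_eq_zero.mp Pt).resolve_right htt
    have hQi : A 5 0 = (A 0 5)⁻¹ := by field_simp; linear_combination hqQ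
    have hRi : A 3 1 = (A 1 3)⁻¹ := by field_simp; linear_combination hrR
    have hTi : A 4 2 = (A 2 4)⁻¹ := by field_simp; linear_combination htT
    refine ⟨A 0 5, A 1 3, A 2 4, hq, hrr, htt, Or.inl ?_⟩
    ext i j
    fin_cases i <;> fin_cases j <;>
      first
      | rfl
      | exact d0 | exact d1 | exact d2 | exact d3 | exact d4 | exact d5 | exact e01 | exact e10 | exact e02 | exact e20 | exact e04 | exact e40 | exact e12 | exact e21 | exact e15 | exact e51 | exact e23 | exact e32 | exact e34 | exact e43 | exact e35 | exact e53 | exact e45 | exact e54 | exact hp | exact hP | exact hs | exact hS | exact hu | exact hU | exact hQi | exact hRi | exact hTi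
  · -- M' case
    have hp : A 0 3 ≠ 0 := left_ne_zero_of_mul hx
    have hQ : A 5 0 = 0 := (mul_eq_zero.mp PQ).resolve_left hp
    have hR : A 3 1 = 0 := (mul_eq_zero.mp PR).resolve_left hp
    have ht : A 2 4 = 0 := (mul_eq_zero.mp Pt).resolve_left hp
    have hpP : A 0 3 * A 3 0 = 1 := by linear_combination E1 - A 0 5 * hQ
    have hsS : A 1 4 * A 4 1 = 1 := by linear_combination E4 - A 4 2 * ht
    have huU : A 2 5 * A 5 2 = 1 := by linear_combination E6 - A 4 2 * ht
    have hss : A 1 4 ≠ 0 := left_ne_zero_of_mul_eq_one hsS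
    have huu : A 2 5 ≠ 0 := left_ne_zero_of_mul_eq_one huU
    have hq : A 0 5 = 0 := (mul_eq_zero.mp QS).resolve_right hss
    have hrr : A 1 3 = 0 := (mul_eq_zero.mp RU).resolve_right huu
    have hT : A 4 2 = 0 := (mul_eq_zero.mp ST).resolve_left hss
    have hPi : A 3 0 = (A 0 3)⁻¹ := by field_simp; linear_combination hpP
    have hSi : A 4 1 = (A 1 4)⁻¹ := by field_simp; linear_combination hsS
    have hUi : A 5 2 = (A 2 5)⁻¹ := by field_simp; linear_combination huU
    refine ⟨A 0 3, A 1 4, A 2 5, hp, hss, huu, Or.inr ?_⟩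
    ext i j
    fin_cases i <;> fin_cases j <;>
      first
      | rfl
      | exact d0 | exact d1 | exact d2 | exact d3 | exact d4 | exact d5 | exact e01 | exact e10 | exact e02 | exact e20 | exact e04 | exact e40 | exact e12 | exact e21 | exact e15 | exact e51 | exact e23 | exact e32 | exact e34 | exact e43 | exact e35 | exact e53 | exact e45 | exact e54 | exact hq | exact hQ | exact hrr | exact hR | exact ht | exact hT | exact hPi | exact hSi | exact hUi


theorem stmt12 :
    (∀ A : Matrix (Fin 6) (Fin 6) ℂ,
      (Fits Hgadget A ∧ A.rank ≤ 3) ↔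
        ∃ a b c : ℂ, a ≠ 0 ∧ b ≠ 0 ∧ c ≠ 0 ∧ (A = Mmat a b c ∨ A = M'mat a b c)) ∧
    (∀ a b c : ℂ, a ≠ 0 → b ≠ 0 → c ≠ 0 →
      (Mmat a b c).rank = 3 ∧ (M'mat a b c).rank = 3) := by
  constructor
  · intro A
    constructor
    · rintro ⟨⟨hone, hz⟩, hr⟩
      exact forward_lemma A hone hz hr
    · rintro ⟨a, b, c, ha, hb, hc, hA | hA⟩ <;> subst hA
      · exact ⟨fits_Mmat a b c, le_of_eq (rank_Mmat a b c ha hb hc)⟩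
      · exact ⟨fits_M'mat a b c, le_of_eq (rank_M'mat a b c ha hb hc)⟩
  · intro a b c ha hb hc
    exact ⟨rank_Mmat a b c ha hb hc, rank_M'mat a b c ha hb hc⟩
end
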